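/- arXiv:2409.02858 — 3 statements merged into one kernel-verified Lean document; each statement's English description precedes it below -/
import Mathlib

section
/- If two permutations π, π' of a finite set X both have a subset C appearing consecutively (as a contiguous block of positions), and they induce the same order on X∖C and place the block of C between the same two neighboring elements of X∖C (i.e., the set of elements of X∖C preceding the block is identical), then inv(π, π') = inv(π[C], π'[C]). -/
/-- A permutation of a finite set is modeled as a duplicate-free list; `inv l l'`
counts the unordered pairs of distinct elements on whose relative order the two
permutations disagree (each disagreeing pair counted exactly once). -/
def inv {α : Type*} [DecidableEq α] (l l' : List α) : ℕ :=
  ((l.toFinset ×ˢ l.toFinset).filter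
    (fun p => l.idxOf p.1 < l.idxOf p.2 ∧ l'.idxOf p.2 < l'.idxOf p.1)).card

/-- `restrict l Z` is the restriction `π[Z]` of the linear order `l` to `Z`. -/
def restrict {α : Type*} [DecidableEq α] (l : List α) (Z : Finset α) : List α :=
  l.filter (· ∈ Z)

/-!
Comparing the restrictions to `X ∖ C` gives `p ++ s = p' ++ s'`; since `p` and `p'` have the
same elements they have the same length, so `π = p ++ m ++ s` and `π' = p ++ m' ++ s` with
`m`, `m'` two arrangements of `C`. In both lists the block occupies the same interval of
positions and every element outside it keeps its position, so a pair not contained in `C`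
is ordered alike by `π` and `π'`. The disagreeing pairs are therefore pairs of `C`, ordered
as in `m` and `m'`.
-/

namespace List

variable {α : Type*} {p m m' s : List α} {a b : α}

theorem Nodup.notMem_left_of_mem_middle (hn : (p ++ m ++ s).Nodup) (ha : a ∈ m) : a ∉ p :=
  fun hp => disjoint_of_nodup_append hn.of_append_left hp ha

theorem Nodup.notMem_middle_of_mem_right (hn : (p ++ m ++ s).Nodup) (ha : a ∈ s) : a ∉ m :=
  fun hm => disjoint_of_nodup_append (append_assoc p m s ▸ hn).of_append_right hm ha

variable [DecidableEq α]

theorem Nodup.idxOf_append_append_of_mem (hn : (p ++ m ++ s).Nodup) (ha : a ∈ m) :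
    (p ++ m ++ s).idxOf a = p.length + m.idxOf a := by
  rw [append_assoc, idxOf_append_of_notMem (hn.notMem_left_of_mem_middle ha),
    idxOf_append_of_mem ha]

theorem Nodup.idxOf_append_append_mem_Ico (hn : (p ++ m ++ s).Nodup) (ha : a ∈ m) :
    (p ++ m ++ s).idxOf a ∈ Set.Ico p.length (p.length + m.length) := by
  rw [hn.idxOf_append_append_of_mem ha, Set.mem_Ico]
  have := idxOf_lt_length_iff.mpr ha
  omega

theorem idxOf_append_append_notMem_Ico (hm : a ∉ m) :
    (p ++ m ++ s).idxOf a ∉ Set.Ico p.length (p.length + m.length) := by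
  rw [Set.mem_Ico, append_assoc]
  by_cases hp : a ∈ p
  · rw [idxOf_append_of_mem hp]
    have := idxOf_lt_length_iff.mpr hp
    omega
  · rw [idxOf_append_of_notMem hp, idxOf_append_of_notMem hm]
    omega

theorem idxOf_append_append_congr (hm : a ∉ m) (hm' : a ∉ m') (hlen : m.length = m'.length) :
    (p ++ m ++ s).idxOf a = (p ++ m' ++ s).idxOf a := by
  by_cases hp : a ∈ p
  · simp only [append_assoc, idxOf_append_of_mem hp]
  · simp only [append_assoc, idxOf_append_of_notMem hp, idxOf_append_of_notMem hm,
      idxOf_append_of_notMem hm', hlen]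

theorem idxOf_lt_idxOf_append_append_iff (hn : (p ++ m ++ s).Nodup)
    (hn' : (p ++ m' ++ s).Nodup) (hmem : ∀ x, x ∈ m ↔ x ∈ m') (hlen : m.length = m'.length)
    (hab : a ∉ m ∨ b ∉ m) :
    (p ++ m ++ s).idxOf a < (p ++ m ++ s).idxOf b ↔
      (p ++ m' ++ s).idxOf a < (p ++ m' ++ s).idxOf b := by
  have inside (x : α) (hx : x ∈ m) :
      (p ++ m ++ s).idxOf x ∈ Set.Ico p.length (p.length + m.length) ∧
        (p ++ m' ++ s).idxOf x ∈ Set.Ico p.length (p.length + m'.length) :=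
    ⟨hn.idxOf_append_append_mem_Ico hx, hn'.idxOf_append_append_mem_Ico ((hmem x).mp hx)⟩
  have outside (x : α) (hx : x ∉ m) :
      (p ++ m ++ s).idxOf x = (p ++ m' ++ s).idxOf x ∧
        (p ++ m ++ s).idxOf x ∉ Set.Ico p.length (p.length + m.length) :=
    ⟨idxOf_append_append_congr hx ((hmem x).not.mp hx) hlen, idxOf_append_append_notMem_Ico hx⟩
  by_cases ha : a ∈ m <;> by_cases hb : b ∈ m
  · tauto
  · have := inside a ha; have := outside b hb; simp only [Set.mem_Ico] at *; omega
  · have := outside a ha; have := inside b hb; simp only [Set.mem_Ico] at *; omega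
  · have := outside a ha; have := outside b hb; omega

end List

section

open List

variable {α : Type*} [DecidableEq α] {p m m' s : List α}

theorem inv_append_append (hn : (p ++ m ++ s).Nodup) (hn' : (p ++ m' ++ s).Nodup)
    (hmm' : m.toFinset = m'.toFinset) : inv (p ++ m ++ s) (p ++ m' ++ s) = inv m m' := by
  have hmem (x : α) : x ∈ m ↔ x ∈ m' := by simpa using congr(x ∈ $hmm')
  have hlen : m.length = m'.length := by
    rw [← toFinset_card_of_nodup hn.of_append_left.of_append_right,
      ← toFinset_card_of_nodup hn'.of_append_left.of_append_right, hmm']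
  unfold inv
  congr 1
  ext ⟨a, b⟩
  simp only [Finset.mem_filter, Finset.mem_product, mem_toFinset]
  by_cases hab : a ∈ m ∧ b ∈ m
  · obtain ⟨ha, hb⟩ := hab
    rw [hn.idxOf_append_append_of_mem ha, hn.idxOf_append_append_of_mem hb,
      hn'.idxOf_append_append_of_mem ((hmem a).mp ha),
      hn'.idxOf_append_append_of_mem ((hmem b).mp hb)]
    simp [ha, hb]
  · have hab_iff := idxOf_lt_idxOf_append_append_iff (s := s) hn hn' hmem hlen
      (not_and_or.mp hab)
    have hba_iff := idxOf_lt_idxOf_append_append_iff (s := s) hn hn' hmem hlen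
      (not_and_or.mp hab).symm
    simp only [hab, false_and, iff_false, not_and]
    omega

theorem restrict_append_append_middle (hn : (p ++ m ++ s).Nodup) :
    restrict (p ++ m ++ s) m.toFinset = m := by
  simp only [restrict, filter_append, mem_toFinset]
  rw [filter_eq_nil_iff.mpr, filter_eq_self.mpr, filter_eq_nil_iff.mpr]
  · simp
  · exact fun x hx => by simpa using hn.notMem_middle_of_mem_right hx
  · simp
  · exact fun x hx => by simpa using fun hm => hn.notMem_left_of_mem_middle hm hx

theorem restrict_append_append_sdiff_middle (hn : (p ++ m ++ s).Nodup) :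
    restrict (p ++ m ++ s) ((p ++ m ++ s).toFinset \ m.toFinset) = p ++ s := by
  simp only [restrict, filter_append, Finset.mem_sdiff, mem_toFinset]
  rw [filter_eq_self.mpr, filter_eq_nil_iff.mpr, filter_eq_self.mpr]
  · simp
  · exact fun x hx => by simpa [hx] using hn.notMem_middle_of_mem_right hx
  · simp +contextual
  · exact fun x hx => by simpa [hx] using fun hm => hn.notMem_left_of_mem_middle hm hx

end

/-- If two permutations `π = p ++ m ++ s` and `π' = p' ++ m' ++ s'` of a finite set
`X` both have the subset `C` appearing consecutively (as the contiguous blocks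
`m`, `m'`), induce the same order on `X ∖ C`, and place the block of `C` between
the same two neighboring elements of `X ∖ C` (i.e. the set of elements of `X ∖ C`
preceding the block is identical: `p` and `p'` have the same elements), then
`inv(π, π') = inv(π[C], π'[C])`. -/
theorem inv_consecutive_block {α : Type*} [DecidableEq α] (X C : Finset α)
    (p m s p' m' s' : List α)
    (hn : (p ++ m ++ s).Nodup) (hn' : (p' ++ m' ++ s').Nodup)
    (hX : (p ++ m ++ s).toFinset = X) (hX' : (p' ++ m' ++ s').toFinset = X)
    (hm : m.toFinset = C) (hm' : m'.toFinset = C)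
    (hout : restrict (p ++ m ++ s) (X \ C) = restrict (p' ++ m' ++ s') (X \ C))
    (hpre : p.toFinset = p'.toFinset) :
    inv (p ++ m ++ s) (p' ++ m' ++ s') =
      inv (restrict (p ++ m ++ s) C) (restrict (p' ++ m' ++ s') C) := by
  subst hX hm
  rw [restrict_append_append_sdiff_middle hn, ← hX', ← hm',
    restrict_append_append_sdiff_middle hn'] at hout
  have hlen : p.length = p'.length := by
    rw [← List.toFinset_card_of_nodup hn.of_append_left.of_append_left,
      ← List.toFinset_card_of_nodup hn'.of_append_left.of_append_left, hpre]
  obtain ⟨rfl, rfl⟩ := List.append_inj hout hlen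
  rw [restrict_append_append_middle hn, ← hm', restrict_append_append_middle hn']
  exact inv_append_append hn hn' hm'.symm
end

section
/- From any solution S of a storyline instance one can construct a type-2-consistent solution S' with cr(S') ≤ cr(S); moreover if S is type-1-consistent then S' can be taken type-1-consistent as well. -/
/-- `C` appears consecutively in `l` if the elements of `C` occupy a contiguous
range of positions of `l`. -/
def ConsecutiveIn {α : Type*} [DecidableEq α] (C : Finset α) (l : List α) : Prop :=
  ∃ p m s : List α, l = p ++ m ++ s ∧ m.toFinset = C

/-- A storyline instance: time steps are `0, 1, …, len - 1`; `AC i` is the set of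
characters active at time step `i` (each character is active on a consecutive
interval of time steps, and no character is active outside the time range); an
interaction is a pair `(time, character set)` whose characters are all active at
its time step; interactions occurring at the same time step have pairwise
disjoint character sets. -/
structure SLInstance (α : Type*) [DecidableEq α] where
  /-- number of time steps -/
  len : ℕ
  /-- active characters at each time step -/
  AC : ℕ → Finset α
  /-- interactions, as pairs (time step, set of participating characters) -/
  inters : Finset (ℕ × Finset α)
  outside : ∀ i, len ≤ i → AC i = ∅
  consecA : ∀ c : α, ∀ i j k : ℕ, i ≤ j → j ≤ k → c ∈ AC i → c ∈ AC k → c ∈ AC j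
  valid : ∀ p ∈ inters, p.1 < len ∧ p.2 ⊆ AC p.1
  disj : ∀ p ∈ inters, ∀ q ∈ inters, p.1 = q.1 → p ≠ q → Disjoint p.2 q.2

/-- A solution (storyline drawing) of a storyline instance: for each time step a
permutation (duplicate-free list) of its active characters, in which the character
set of every interaction at that time step appears consecutively. -/
structure SLSolution {α : Type*} [DecidableEq α] (P : SLInstance α) where
  /-- the permutation of active characters at each time step -/
  ord : ℕ → List α
  nodup : ∀ i, (ord i).Nodup
  perm : ∀ i, (ord i).toFinset = P.AC i
  consec : ∀ p ∈ P.inters, ConsecutiveIn p.2 (ord p.1)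

/-- The number of crossings of a storyline solution: the sum, over consecutive
time steps, of the inversions between the two permutations restricted to the
commonly active characters. -/
def crS {α : Type*} [DecidableEq α] (P : SLInstance α) (S : SLSolution P) : ℕ :=
  ∑ i ∈ Finset.range (P.len - 1),
    inv (restrict (S.ord i) (P.AC i ∩ P.AC (i + 1)))
        (restrict (S.ord (i + 1)) (P.AC i ∩ P.AC (i + 1)))

/-- `IConsistent P S i C` expresses that the solution `S` is `I`-consistent for an
interaction `I` with time step `i` and character set `C`: for every time step `j ≤ i`
such that all of `C` is active throughout `[j, i]` and at every intermediate time
step `k` (with `j < k ≤ i`) either no character of `C` participates in any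
interaction at `k` or some interaction at `k` contains all of `C`, the induced
order of `C` is the same at every time step of `[j, i]` as at `i`. (Requiring this
for every such `j` is equivalent to requiring it for the minimal one, `j(I)`.) -/
def IConsistent {α : Type*} [DecidableEq α] (P : SLInstance α) (S : SLSolution P)
    (i : ℕ) (C : Finset α) : Prop :=
  ∀ j ≤ i, (∀ k, j ≤ k → k ≤ i → C ⊆ P.AC k) →
    (∀ k, j < k → k ≤ i →
      ((∀ p ∈ P.inters, p.1 = k → Disjoint p.2 C) ∨
        ∃ p ∈ P.inters, p.1 = k ∧ C ⊆ p.2)) →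
    ∀ k, j ≤ k → k ≤ i → restrict (S.ord k) C = restrict (S.ord i) C

/-- A solution is type-1-consistent if it is `I`-consistent for every
interaction `I`. -/
def Type1Consistent {α : Type*} [DecidableEq α] (P : SLInstance α)
    (S : SLSolution P) : Prop :=
  ∀ p ∈ P.inters, IConsistent P S p.1 p.2

/-- A solution is type-2-consistent if for every pair of interactions `I₁, I₂`
with the same character set `C`, times `i < j`, such that at every intermediate
time step `k` (with `i < k < j`) either no character of `C` participates in any
interaction at `k` or some interaction at `k` contains all of `C`, the characters
of `C` are kept together at every intermediate time step: `π_k` can be written as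
`π^a ⋆ π_i[C] ⋆ π^b`. -/
def Type2Consistent {α : Type*} [DecidableEq α] (P : SLInstance α)
    (S : SLSolution P) : Prop :=
  ∀ (i j : ℕ) (C : Finset α), (i, C) ∈ P.inters → (j, C) ∈ P.inters → i < j →
    (∀ k, i < k → k < j →
      ((∀ p ∈ P.inters, p.1 = k → Disjoint p.2 C) ∨
        ∃ p ∈ P.inters, p.1 = k ∧ C ⊆ p.2)) →
    ∀ k, i < k → k < j →
      ∃ a b : List α, S.ord k = a ++ restrict (S.ord i) C ++ b

/-!
Take a violated type-2 requirement whose character set `C` is as small as possible and widen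
it to a maximal window `[I, J]`: `(I, C)` and `(J, C)` are interactions and every interaction
strictly between them avoids `C` or contains it. Strictly inside the window, move all of `C`
to the position of one member `cs`, in the order `C` has at time `I` (`regroup`). Interactions
stay consecutive, pairs outside `C` keep their crossings, a pair inside `C` now crosses at most
once and only if its orders at `I` and `J` differ (so it crossed in the old solution too), and
every member of `C` crosses the remaining characters exactly as `cs` did. Choosing `cs` of
minimum `weight` then does not increase the number of crossings, since `|C| · weight cs` is at
most the sum of the weights. Maximality of the window and minimality of `|C|` show that no
requirement becomes violated, while the chosen one is now met. Type-1 consistency survives: an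
interaction meeting `C` strictly inside the window contains `C`, so all its restricted orders
are regrouped alike, and one meeting `C` at time `J` lies inside `C`, so its restricted order is
frozen at its order at time `I`. The number of violations drops, and we iterate.
-/

namespace Storyline

variable {α : Type*}

section Sums

theorem sum_product_eq_blocks {M : Type*} [AddCommMonoid M] [DecidableEq α] {T C : Finset α}
    (hC : C ⊆ T) (g : α → α → M) :
    ∑ p ∈ T ×ˢ T, g p.1 p.2 = ∑ x ∈ T \ C, ∑ y ∈ T \ C, g x y +
      ∑ c ∈ C, ∑ x ∈ T \ C, (g c x + g x c) + ∑ c ∈ C, ∑ c' ∈ C, g c c' := by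
  rw [Finset.sum_product, ← Finset.sum_sdiff hC]
  simp_rw [← Finset.sum_sdiff hC (f := g _), Finset.sum_add_distrib]
  rw [Finset.sum_comm (s := T \ C) (t := C)]
  abel

theorem sum_sum_le_of_add_swap_le {C : Finset α} {f g : α → α → ℕ}
    (h : ∀ u ∈ C, ∀ v ∈ C, g u v + g v u ≤ f u v + f v u) :
    ∑ u ∈ C, ∑ v ∈ C, g u v ≤ ∑ u ∈ C, ∑ v ∈ C, f u v := by
  have double : ∀ f : α → α → ℕ,
      ∑ u ∈ C, ∑ v ∈ C, (f u v + f v u) = 2 * ∑ u ∈ C, ∑ v ∈ C, f u v := fun f => by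
    simp only [Finset.sum_add_distrib]
    rw [Finset.sum_comm (f := fun u v => f v u)]
    ring
  have := Finset.sum_le_sum fun u hu => Finset.sum_le_sum fun v hv => h u hu v hv
  rw [double, double] at this
  omega

end Sums

section Flips

def flips (f : ℕ → Prop) [DecidablePred f] (I J : ℕ) : ℕ :=
  ((Finset.Ico I J).filter fun k => ¬ (f k ↔ f (k + 1))).card

theorem one_le_flips {f : ℕ → Prop} [DecidablePred f] {I J : ℕ} (hIJ : I ≤ J)
    (h : ¬ (f I ↔ f J)) : 1 ≤ flips f I J := by
  induction J, hIJ using Nat.le_induction with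
  | base => exact absurd Iff.rfl h
  | succ J hIJ ih =>
    unfold flips at ih ⊢
    by_cases hJ : f I ↔ f J
    · exact Finset.card_pos.2 ⟨J, Finset.mem_filter.2
        ⟨Finset.mem_Ico.2 ⟨hIJ, J.lt_succ_self⟩, fun h' => h (hJ.trans h')⟩⟩
    · exact (ih hJ).trans (Finset.card_le_card
        (Finset.filter_subset_filter _ (Finset.Ico_subset_Ico_right J.le_succ)))

theorem flips_le_flips {f g : ℕ → Prop} [DecidablePred f] [DecidablePred g] {I J : ℕ}
    (hIJ : I < J) (hg : ∀ k, I ≤ k → k < J → (g k ↔ g I)) (hI : g I ↔ f I) (hJ : g J ↔ f J) :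
    flips g I J ≤ flips f I J := by
  have last : ∀ k ∈ Finset.Ico I J, ¬ (g k ↔ g (k + 1)) → k + 1 = J := fun k hk hflip => by
    rw [Finset.mem_Ico] at hk
    by_contra hkJ
    exact hflip ((hg k hk.1 hk.2).trans (hg (k + 1) (by omega) (by omega)).symm)
  by_cases hf : f I ↔ f J
  · have : flips g I J = 0 := by
      refine Finset.card_eq_zero.2 (Finset.filter_eq_empty_iff.2 fun k hk hflip => hflip ?_)
      rw [hg k (Finset.mem_Ico.1 hk).1 (Finset.mem_Ico.1 hk).2, last k hk hflip]
      exact hI.trans (hf.trans hJ.symm)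
    omega
  · refine le_trans (Finset.card_le_one.2 fun a ha b hb => ?_) (one_le_flips hIJ.le hf)
    rw [Finset.mem_filter] at ha hb
    have := last a ha.1 ha.2
    have := last b hb.1 hb.2
    omega

end Flips

section Precedes

def Precedes (l : List α) (u v : α) : Prop := u ≠ v ∧ [u, v].Sublist l

variable {l l' A B : List α} {u v : α}

theorem Precedes.ne (h : Precedes l u v) : u ≠ v := h.1

theorem Precedes.mem_left (h : Precedes l u v) : u ∈ l := h.2.subset (by simp)

theorem Precedes.mem_right (h : Precedes l u v) : v ∈ l := h.2.subset (by simp)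

theorem precedes_append_iff :
    Precedes (A ++ B) u v ↔ Precedes A u v ∨ Precedes B u v ∨ (u ∈ A ∧ v ∈ B ∧ u ≠ v) := by
  simp only [Precedes, List.sublist_append_iff]
  constructor
  · rintro ⟨huv, l₁, l₂, hsplit, h₁, h₂⟩
    rcases l₁ with _ | ⟨a, _ | ⟨b, _ | ⟨c, l₁⟩⟩⟩ <;>
      simp only [List.nil_append, List.cons_append, List.cons.injEq, List.nil_eq, reduceCtorEq,
        and_false] at hsplit
    · exact .inr (.inl ⟨huv, hsplit ▸ h₂⟩)
    · obtain ⟨rfl, rfl⟩ := hsplit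
      exact .inr (.inr ⟨h₁.subset (by simp), h₂.subset (by simp), huv⟩)
    · obtain ⟨rfl, rfl, -⟩ := hsplit
      exact .inl ⟨huv, h₁⟩
  · rintro (⟨huv, h⟩ | ⟨huv, h⟩ | ⟨hu, hv, huv⟩)
    · exact ⟨huv, [u, v], [], by simp, h, by simp⟩
    · exact ⟨huv, [], [u, v], by simp, by simp, h⟩
    · exact ⟨huv, [u], [v], by simp, by simpa using hu, by simpa using hv⟩

theorem precedes_cons_iff {a : α} :
    Precedes (a :: B) u v ↔ Precedes B u v ∨ (u = a ∧ v ∈ B ∧ u ≠ v) := by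
  rw [← List.singleton_append, precedes_append_iff]
  simp [Precedes]

theorem precedes_filter_iff {p : α → Bool} (hu : p u) (hv : p v) :
    Precedes (l.filter p) u v ↔ Precedes l u v := by
  refine ⟨fun h => ⟨h.1, h.2.trans List.filter_sublist⟩, fun h => ⟨h.1, ?_⟩⟩
  simpa [hu, hv] using h.2.filter p

theorem idxOf_lt_idxOf_iff_precedes [DecidableEq α] (hl : l.Nodup) (hu : u ∈ l)
    (hv : v ∈ l) : l.idxOf u < l.idxOf v ↔ Precedes l u v := by
  induction l with
  | nil => simp at hu
  | cons a t ih =>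
    obtain ⟨hat, ht⟩ := List.nodup_cons.1 hl
    rw [precedes_cons_iff]
    rcases List.mem_cons.1 hu with rfl | hut <;> rcases List.mem_cons.1 hv with rfl | hvt
    · simp [Precedes]
    · have : u ≠ v := fun h => hat (h ▸ hvt)
      simp [this, hvt]
    · have : v ≠ u := fun h => hat (h ▸ hut)
      simpa [this, Ne.symm this] using fun h : Precedes t u v => hat h.mem_right
    · have hua : u ≠ a := fun h => hat (h ▸ hut)
      have hva : v ≠ a := fun h => hat (h ▸ hvt)
      simp [hua.symm, hva.symm, hua, ih ht hut hvt]

theorem Precedes.not_precedes [DecidableEq α] (hl : l.Nodup) (h : Precedes l u v) :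
    ¬ Precedes l v u := by
  intro h'
  have := (idxOf_lt_idxOf_iff_precedes hl h.mem_left h.mem_right).2 h
  have := (idxOf_lt_idxOf_iff_precedes hl h'.mem_left h'.mem_right).2 h'
  omega

theorem precedes_or_precedes [DecidableEq α] (hl : l.Nodup) (hu : u ∈ l) (hv : v ∈ l)
    (huv : u ≠ v) : Precedes l u v ∨ Precedes l v u := by
  rw [← idxOf_lt_idxOf_iff_precedes hl hu hv, ← idxOf_lt_idxOf_iff_precedes hl hv hu]
  have := mt (List.idxOf_inj hu).1 huv
  omega

theorem exists_eq_append_cons {c : α} (hl : l.Nodup) (hc : c ∈ l) :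
    ∃ a b, l = a ++ c :: b ∧ c ∉ a ∧ c ∉ b := by
  obtain ⟨a, b, rfl⟩ := List.append_of_mem hc
  rw [List.nodup_append] at hl
  exact ⟨a, b, rfl, fun h => hl.2.2 c h c List.mem_cons_self rfl, (List.nodup_cons.1 hl.2.1).1⟩

theorem precedes_append_append_iff [DecidableEq α] {s m t : List α} {c x : α}
    (hl : (s ++ m ++ t).Nodup) (hc : c ∈ m) (hx : x ∉ m) :
    (Precedes (s ++ m ++ t) c x ↔ x ∈ t) ∧ (Precedes (s ++ m ++ t) x c ↔ x ∈ s) := by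
  have hcx : c ≠ x := fun h => hx (h ▸ hc)
  rw [List.nodup_append, List.nodup_append] at hl
  have hcs : c ∉ s := fun h => hl.1.2.2 c h c hc rfl
  have hct : c ∉ t := fun h => hl.2.2 c (by simp [hc]) c h rfl
  simp only [precedes_append_iff, List.mem_append]
  refine ⟨⟨?_, fun h => .inr (.inr ⟨.inr hc, h, hcx⟩)⟩,
    ⟨?_, fun h => .inl (.inr (.inr ⟨h, hc, hcx.symm⟩))⟩⟩
  · rintro ((h | h | ⟨h, -⟩) | h | ⟨-, h, -⟩)
    exacts [absurd h.mem_left hcs, absurd h.mem_right hx, absurd h hcs, absurd h.mem_left hct,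
      h]
  · rintro ((h | h | ⟨h, -⟩) | h | ⟨-, h, -⟩)
    exacts [absurd h.mem_right hcs, absurd h.mem_left hx, h, absurd h.mem_right hct,
      absurd h hct]

theorem precedes_iff_not_precedes [DecidableEq α] (hl : l.Nodup) (hu : u ∈ l) (hv : v ∈ l)
    (huv : u ≠ v) : Precedes l v u ↔ ¬ Precedes l u v :=
  ⟨fun h h' => h'.not_precedes hl h, (precedes_or_precedes hl hu hv huv).resolve_left⟩

end Precedes

variable [DecidableEq α]

section Restrict

variable {D : Finset α} {l : List α} {u v : α}

theorem restrict_append (l₁ l₂ : List α) :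
    restrict (l₁ ++ l₂) D = restrict l₁ D ++ restrict l₂ D :=
  List.filter_append ..

@[simp]
theorem mem_restrict {x : α} : x ∈ restrict l D ↔ x ∈ l ∧ x ∈ D := by
  simp [restrict]

theorem nodup_restrict (hl : l.Nodup) : (restrict l D).Nodup :=
  hl.filter _

theorem toFinset_restrict (h : D ⊆ l.toFinset) : (restrict l D).toFinset = D := by
  ext x
  simpa using fun hx => List.mem_toFinset.1 (h hx)

theorem restrict_restrict_of_subset {C : Finset α} (h : D ⊆ C) :
    restrict (restrict l C) D = restrict l D := by
  simp only [restrict, List.filter_filter]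
  refine List.filter_congr fun x _ => ?_
  by_cases hx : x ∈ D
  · simp [hx, h hx]
  · simp [hx]

theorem restrict_eq_nil (h : ∀ x ∈ l, x ∉ D) : restrict l D = [] :=
  List.filter_eq_nil_iff.2 (by simpa using h)

theorem restrict_eq_self (h : ∀ x ∈ l, x ∈ D) : restrict l D = l :=
  List.filter_eq_self.2 (by simpa using h)

theorem precedes_restrict_iff (hu : u ∈ D) (hv : v ∈ D) :
    Precedes (restrict l D) u v ↔ Precedes l u v :=
  precedes_filter_iff (by simpa using hu) (by simpa using hv)

theorem isInfix_restrict {m : List α} (h : m <:+: l) (hm : ∀ x ∈ m, x ∈ D) :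
    m <:+: restrict l D := by
  have := h.filter (· ∈ D)
  rwa [← restrict, ← restrict, restrict_eq_self hm] at this

end Restrict

section Gather

variable {C D : Finset α} {c : α} {σ l a b : List α}

def gather (C : Finset α) (c : α) (σ : List α) (l : List α) : List α :=
  l.flatMap fun x => if x = c then σ else if x ∈ C then [] else [x]

theorem gather_append (l₁ l₂ : List α) :
    gather C c σ (l₁ ++ l₂) = gather C c σ l₁ ++ gather C c σ l₂ :=
  List.flatMap_append

theorem gather_of_not_mem (hc : c ∉ l) : gather C c σ l = l.filter (· ∉ C) := by
  induction l with
  | nil => rfl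
  | cons x l ih =>
    have hxc : x ≠ c := fun h => hc (h ▸ List.mem_cons_self)
    rw [gather, List.flatMap_cons, ← gather, ih (fun h => hc (List.mem_cons_of_mem x h))]
    by_cases hx : x ∈ C <;> simp [hxc, hx]

theorem gather_eq_self (hc : c ∈ C) (hl : ∀ x ∈ l, x ∉ C) : gather C c σ l = l := by
  rw [gather_of_not_mem fun h => hl c h hc, List.filter_eq_self]
  simpa using hl

theorem gather_append_cons (ha : c ∉ a) (hb : c ∉ b) :
    gather C c σ (a ++ c :: b) = a.filter (· ∉ C) ++ σ ++ b.filter (· ∉ C) := by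
  rw [gather_append, ← List.singleton_append, gather_append, gather_of_not_mem ha,
    gather_of_not_mem hb]
  simp [gather]

theorem isInfix_gather (hl : l.Nodup) (hc : c ∈ l) : σ <:+: gather C c σ l := by
  obtain ⟨a, b, rfl, ha, hb⟩ := exists_eq_append_cons hl hc
  rw [gather_append_cons ha hb]
  exact ⟨_, _, rfl⟩

theorem restrict_gather_of_disjoint (hc : c ∈ C) (hσ : ∀ x ∈ σ, x ∈ C) (hD : Disjoint D C) :
    restrict (gather C c σ l) D = restrict l D := by
  induction l with
  | nil => rfl
  | cons x l ih =>
    rw [← List.singleton_append, gather_append, restrict_append, restrict_append, ih]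
    have hσD : restrict σ D = [] :=
      restrict_eq_nil fun y hy => Finset.disjoint_right.1 hD (hσ y hy)
    by_cases hxc : x = c
    · subst hxc
      simpa [gather, restrict, Finset.disjoint_right.1 hD hc] using hσD
    · by_cases hx : x ∈ C <;> simp [gather, restrict, hxc, hx, Finset.disjoint_right.1 hD]

theorem restrict_gather_of_superset (hc : c ∈ C) (hσ : ∀ x ∈ σ, x ∈ C) (hCD : C ⊆ D) :
    restrict (gather C c σ l) D = gather C c σ (restrict l D) := by
  induction l with
  | nil => rfl
  | cons x l ih =>
    rw [← List.singleton_append, gather_append, restrict_append, restrict_append, ih,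
      gather_append]
    have hσD : restrict σ D = σ := restrict_eq_self fun y hy => hCD (hσ y hy)
    by_cases hxc : x = c
    · subst hxc
      simpa [gather, restrict, hCD hc] using hσD
    · by_cases hx : x ∈ C <;> by_cases hxD : x ∈ D <;> simp [gather, restrict, hxc, hx, hxD]

theorem restrict_gather_of_subset (hl : l.Nodup) (hc : c ∈ l) (hDC : D ⊆ C) :
    restrict (gather C c σ l) D = restrict σ D := by
  obtain ⟨a, b, rfl, ha, hb⟩ := exists_eq_append_cons hl hc
  have hnil : ∀ t : List α, restrict (t.filter (· ∉ C)) D = [] := fun t =>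
    List.filter_eq_nil_iff.2 fun y hy hyD => by
      simpa [hDC (by simpa using hyD)] using (List.mem_filter.1 hy).2
  rw [gather_append_cons ha hb, restrict_append, restrict_append, hnil, hnil, List.nil_append,
    List.append_nil]

theorem mem_gather (hc : c ∈ C) {x : α} :
    x ∈ gather C c σ l ↔ (c ∈ l ∧ x ∈ σ) ∨ (x ∈ l ∧ x ∉ C) := by
  simp only [gather, List.mem_flatMap]
  constructor
  · rintro ⟨y, hy, hx⟩
    by_cases hyc : y = c
    · subst hyc; simp_all
    · by_cases hyC : y ∈ C <;> simp_all
  · rintro (⟨hcl, hx⟩ | ⟨hx, hxC⟩)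
    · exact ⟨c, hcl, by simpa using hx⟩
    · have hxc : x ≠ c := fun h => hxC (h ▸ hc)
      exact ⟨x, hx, by simp [hxC, hxc]⟩

theorem nodup_gather (hσ : σ.Nodup) (hσC : ∀ x ∈ σ, x ∈ C) (hl : l.Nodup) (hc : c ∈ l) :
    (gather C c σ l).Nodup := by
  obtain ⟨a, b, rfl, ha, hb⟩ := exists_eq_append_cons hl hc
  rw [gather_append_cons ha hb]
  rw [List.nodup_append, List.nodup_cons] at hl
  simp only [List.nodup_append, List.mem_append, List.mem_filter, decide_eq_true_eq]
  refine ⟨⟨hl.1.filter _, hσ, ?_⟩, hl.2.1.2.filter _, ?_⟩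
  · rintro x ⟨-, hx⟩ y hy rfl
    exact hx (hσC x hy)
  · rintro x (⟨hxa, -⟩ | hx) y ⟨hyb, hy⟩ rfl
    · exact hl.2.2 x hxa x (List.mem_cons_of_mem c hyb) rfl
    · exact hy (hσC x hx)

theorem toFinset_gather (hc : c ∈ C) (hσC : σ.toFinset = C) (hcl : c ∈ l)
    (hCl : C ⊆ l.toFinset) : (gather C c σ l).toFinset = l.toFinset := by
  ext x
  have hσx : x ∈ σ ↔ x ∈ C := by rw [← List.mem_toFinset, hσC]
  rw [List.mem_toFinset, List.mem_toFinset, mem_gather hc, hσx]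
  by_cases hx : x ∈ C
  · simpa [hx, hcl] using hCl hx
  · simp [hx]

theorem precedes_gather_iff_of_mem_of_not_mem (hc : c ∈ C) (hσ : σ.Nodup) (hσC : σ.toFinset = C)
    (hl : l.Nodup) (hcl : c ∈ l) {d x : α} (hd : d ∈ C) (hx : x ∉ C) :
    (Precedes (gather C c σ l) d x ↔ Precedes l c x) ∧
      (Precedes (gather C c σ l) x d ↔ Precedes l x c) := by
  have hσC' : ∀ y, y ∈ σ ↔ y ∈ C := fun y => by rw [← List.mem_toFinset, hσC]
  have hnd := nodup_gather hσ (fun y => (hσC' y).1) hl hcl (C := C)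
  obtain ⟨a, b, rfl, ha, hb⟩ := exists_eq_append_cons hl hcl
  rw [gather_append_cons ha hb] at hnd ⊢
  rw [List.append_cons] at hl ⊢
  have hxc : x ∉ [c] := by simpa using fun h : x = c => hx (h ▸ hc)
  rw [(precedes_append_append_iff hnd ((hσC' d).2 hd) (mt (hσC' x).1 hx)).1,
    (precedes_append_append_iff hnd ((hσC' d).2 hd) (mt (hσC' x).1 hx)).2,
    (precedes_append_append_iff hl (List.mem_singleton_self c) hxc).1,
    (precedes_append_append_iff hl (List.mem_singleton_self c) hxc).2]
  simp [hx]

theorem gather_self (hl : l.Nodup) (hcl : c ∈ l) (hlC : ∀ x ∈ l, x ∈ C) :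
    gather C c l l = l := by
  obtain ⟨a, b, hab, ha, hb⟩ := exists_eq_append_cons hl hcl
  conv_lhs => rw [hab]
  rw [gather_append_cons ha hb, List.filter_eq_nil_iff.2, List.filter_eq_nil_iff.2] <;>
    simp_all

end Gather

section Consecutive

variable {C D : Finset α} {c : α} {l : List α}

theorem _root_.ConsecutiveIn.exists_eq_append (h : ConsecutiveIn C l) (hl : l.Nodup) :
    ∃ s t, l = s ++ restrict l C ++ t ∧ (∀ x ∈ s, x ∉ C) ∧ (∀ x ∈ t, x ∉ C) := by
  obtain ⟨s, m, t, rfl, rfl⟩ := h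
  simp only [List.nodup_append, List.mem_append] at hl
  have hs : ∀ x ∈ s, x ∉ m.toFinset := fun x hx hxm =>
    hl.1.2.2 x hx x (List.mem_toFinset.1 hxm) rfl
  have ht : ∀ x ∈ t, x ∉ m.toFinset := fun x hx hxm =>
    hl.2.2 x (.inr (List.mem_toFinset.1 hxm)) x hx rfl
  refine ⟨s, t, ?_, hs, ht⟩
  rw [restrict_append, restrict_append, restrict_eq_nil hs, restrict_eq_nil ht,
    restrict_eq_self fun x hx => List.mem_toFinset.2 hx, List.nil_append, List.append_nil]

theorem _root_.ConsecutiveIn.subset (h : ConsecutiveIn C l) : C ⊆ l.toFinset := by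
  obtain ⟨s, m, t, rfl, rfl⟩ := h
  intro x hx
  simp_all

theorem _root_.ConsecutiveIn.precedes_iff (h : ConsecutiveIn C l) (hl : l.Nodup) {d x : α}
    (hc : c ∈ C) (hd : d ∈ C) (hx : x ∉ C) :
    (Precedes l d x ↔ Precedes l c x) ∧ (Precedes l x d ↔ Precedes l x c) := by
  have hmem : ∀ y ∈ C, y ∈ restrict l C := fun y hy =>
    mem_restrict.2 ⟨List.mem_toFinset.1 (h.subset hy), hy⟩
  have hxm : x ∉ restrict l C := fun hx' => hx (mem_restrict.1 hx').2
  obtain ⟨s, t, hst, -, -⟩ := h.exists_eq_append hl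
  rw [hst] at hl ⊢
  rw [(precedes_append_append_iff hl (hmem d hd) hxm).1,
    (precedes_append_append_iff hl (hmem d hd) hxm).2,
    (precedes_append_append_iff hl (hmem c hc) hxm).1,
    (precedes_append_append_iff hl (hmem c hc) hxm).2]
  exact ⟨Iff.rfl, Iff.rfl⟩

theorem _root_.ConsecutiveIn.gather_restrict (h : ConsecutiveIn C l) (hl : l.Nodup) (hc : c ∈ C)
    (hCD : C ⊆ D) : gather C c (restrict l C) (restrict l D) = restrict l D := by
  have hCl : ∀ x ∈ restrict l C, x ∈ C := fun x hx => (mem_restrict.1 hx).2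
  have hcl : c ∈ restrict l C := mem_restrict.2 ⟨List.mem_toFinset.1 (h.subset hc), hc⟩
  obtain ⟨s, t, hst, hs, ht⟩ := h.exists_eq_append hl
  set m := restrict l C
  have hm : gather C c m m = m := gather_self (nodup_restrict hl) hcl hCl
  have hs' : ∀ x ∈ restrict s D, x ∉ C := fun x hx => hs x (mem_restrict.1 hx).1
  have ht' : ∀ x ∈ restrict t D, x ∉ C := fun x hx => ht x (mem_restrict.1 hx).1
  rw [hst, restrict_append, restrict_append, restrict_eq_self fun x hx => hCD (hCl x hx),
    gather_append, gather_append, gather_eq_self hc hs', gather_eq_self hc ht', hm]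

theorem _root_.ConsecutiveIn.gather {E : Finset α} {σ : List α} (h : ConsecutiveIn E l)
    (hl : l.Nodup) (hc : c ∈ C) (hσ : σ.toFinset = C) (hEC : Disjoint E C ∨ C ⊆ E) :
    ConsecutiveIn E (gather C c σ l) := by
  obtain ⟨s, m, t, rfl, rfl⟩ := h
  rw [gather_append, gather_append]
  rcases hEC with hEC | hCE
  · have hm : gather C c σ m = m :=
      gather_eq_self hc fun x hx => Finset.disjoint_left.1 hEC (List.mem_toFinset.2 hx)
    exact ⟨_, m, _, by rw [hm], rfl⟩
  · have hst : ∀ x ∈ s ++ t, x ∉ C := fun x hx hxC => by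
      have hxm := List.mem_toFinset.1 (hCE hxC)
      simp only [List.nodup_append, List.mem_append] at hl
      rcases List.mem_append.1 hx with hxs | hxt
      · exact hl.1.2.2 x hxs x hxm rfl
      · exact hl.2.2 x (.inr hxm) x hxt rfl
    refine ⟨s, gather C c σ m, t, ?_, ?_⟩
    · rw [gather_eq_self (l := s) hc fun x hx => hst x (List.mem_append_left t hx),
        gather_eq_self (l := t) hc fun x hx => hst x (List.mem_append_right s hx)]
    · exact toFinset_gather hc hσ (List.mem_toFinset.1 (hCE hc)) hCE

end Consecutive

section Inversions

instance (l : List α) (u v : α) : Decidable (Precedes l u v) :=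
  inferInstanceAs (Decidable (_ ∧ _))

theorem inv_restrict_eq_card {l l' : List α} {D : Finset α} (hl : l.Nodup) (hl' : l'.Nodup)
    (hDl : D ⊆ l.toFinset) (hDl' : D ⊆ l'.toFinset) :
    inv (restrict l D) (restrict l' D) =
      ((D ×ˢ D).filter fun p => Precedes l p.1 p.2 ∧ Precedes l' p.2 p.1).card := by
  rw [inv, toFinset_restrict hDl]
  congr 1
  refine Finset.filter_congr fun p hp => ?_
  obtain ⟨hp₁, hp₂⟩ := Finset.mem_product.1 hp
  have mem : ∀ {m : List α}, D ⊆ m.toFinset → ∀ {x}, x ∈ D → x ∈ restrict m D :=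
    fun h x hx => mem_restrict.2 ⟨List.mem_toFinset.1 (h hx), hx⟩
  rw [idxOf_lt_idxOf_iff_precedes (nodup_restrict hl) (mem hDl hp₁) (mem hDl hp₂),
    idxOf_lt_idxOf_iff_precedes (nodup_restrict hl') (mem hDl' hp₂) (mem hDl' hp₁),
    precedes_restrict_iff hp₁ hp₂, precedes_restrict_iff hp₂ hp₁]

end Inversions

variable {P : SLInstance α}

section Crossings

theorem _root_.SLSolution.mem_ord (S : SLSolution P) {k : ℕ} {x : α} :
    x ∈ S.ord k ↔ x ∈ P.AC k := by
  rw [← List.mem_toFinset, S.perm]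

def CrossesAt (S : SLSolution P) (k : ℕ) (u v : α) : Prop :=
  u ∈ P.AC k ∩ P.AC (k + 1) ∧ v ∈ P.AC k ∩ P.AC (k + 1) ∧
    Precedes (S.ord k) u v ∧ Precedes (S.ord (k + 1)) v u

instance (S : SLSolution P) (k : ℕ) (u v : α) : Decidable (CrossesAt S k u v) :=
  inferInstanceAs (Decidable (_ ∧ _))

def crossings (S : SLSolution P) (I J : ℕ) (u v : α) : ℕ :=
  ((Finset.Ico I J).filter fun k => CrossesAt S k u v).card

theorem inv_eq_card_crossesAt (S : SLSolution P) (k : ℕ) {T : Finset α}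
    (hT : P.AC k ∩ P.AC (k + 1) ⊆ T) :
    inv (restrict (S.ord k) (P.AC k ∩ P.AC (k + 1)))
        (restrict (S.ord (k + 1)) (P.AC k ∩ P.AC (k + 1))) =
      ((T ×ˢ T).filter fun p => CrossesAt S k p.1 p.2).card := by
  rw [inv_restrict_eq_card (S.nodup k) (S.nodup (k + 1))
    (S.perm k ▸ Finset.inter_subset_left) (S.perm (k + 1) ▸ Finset.inter_subset_right)]
  congr 1
  ext ⟨u, v⟩
  simp only [Finset.mem_filter, Finset.mem_product]
  unfold CrossesAt
  constructor
  · rintro ⟨⟨hu, hv⟩, h⟩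
    exact ⟨⟨hT hu, hT hv⟩, hu, hv, h⟩
  · rintro ⟨-, hu, hv, h⟩
    exact ⟨⟨hu, hv⟩, h⟩

theorem sum_inv_eq_sum_crossings (S : SLSolution P) {I J : ℕ} {T : Finset α}
    (hT : ∀ k ∈ Finset.Ico I J, P.AC k ∩ P.AC (k + 1) ⊆ T) :
    ∑ k ∈ Finset.Ico I J, inv (restrict (S.ord k) (P.AC k ∩ P.AC (k + 1)))
        (restrict (S.ord (k + 1)) (P.AC k ∩ P.AC (k + 1))) =
      ∑ p ∈ T ×ˢ T, crossings S I J p.1 p.2 := by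
  rw [Finset.sum_congr rfl fun k hk => inv_eq_card_crossesAt S k (hT k hk)]
  simp only [crossings, Finset.card_filter]
  exact Finset.sum_comm

theorem crS_le_crS_of_window {S S' : SLSolution P} {I J : ℕ} {T : Finset α} (hJ : J < P.len)
    (hT : ∀ k ∈ Finset.Ico I J, P.AC k ∩ P.AC (k + 1) ⊆ T)
    (heq : ∀ k, k ≤ I ∨ J ≤ k → S'.ord k = S.ord k)
    (hle : ∑ p ∈ T ×ˢ T, crossings S' I J p.1 p.2 ≤ ∑ p ∈ T ×ˢ T, crossings S I J p.1 p.2) :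
    crS P S' ≤ crS P S := by
  have hsub : Finset.Ico I J ⊆ Finset.range (P.len - 1) := fun k hk => by
    simp only [Finset.mem_Ico, Finset.mem_range] at hk ⊢
    omega
  rw [crS, crS, ← Finset.sum_sdiff hsub, ← Finset.sum_sdiff hsub (f := fun k => inv _ _),
    sum_inv_eq_sum_crossings S hT, sum_inv_eq_sum_crossings S' hT]
  refine Nat.add_le_add (le_of_eq (Finset.sum_congr rfl fun k hk => ?_)) hle
  simp only [Finset.mem_sdiff, Finset.mem_Ico] at hk
  rw [heq k (by omega), heq (k + 1) (by omega)]

theorem crossings_add_crossings_eq_flips (S : SLSolution P) {I J : ℕ} {u v : α} (huv : u ≠ v)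
    (huv_mem : ∀ k ∈ Finset.Ico I J, u ∈ P.AC k ∩ P.AC (k + 1) ∧ v ∈ P.AC k ∩ P.AC (k + 1)) :
    crossings S I J u v + crossings S I J v u = flips (fun k => Precedes (S.ord k) u v) I J := by
  rw [crossings, crossings, ← Finset.card_union_of_disjoint, ← Finset.filter_or, flips]
  · congr 1
    refine Finset.filter_congr fun k hk => ?_
    obtain ⟨hu, hv⟩ := huv_mem k hk
    have h₀ := precedes_iff_not_precedes (S.nodup k) (S.mem_ord.2 (Finset.mem_inter.1 hu).1)
      (S.mem_ord.2 (Finset.mem_inter.1 hv).1) huv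
    have h₁ := precedes_iff_not_precedes (S.nodup (k + 1))
      (S.mem_ord.2 (Finset.mem_inter.1 hu).2) (S.mem_ord.2 (Finset.mem_inter.1 hv).2) huv
    unfold CrossesAt
    rw [h₀, h₁]
    tauto
  · refine Finset.disjoint_filter.2 fun k _ h h' => h.2.2.1.not_precedes (S.nodup k) h'.2.2.1

theorem crossings_self (S : SLSolution P) (I J : ℕ) (u : α) : crossings S I J u u = 0 :=
  Finset.card_eq_zero.2 (Finset.filter_eq_empty_iff.2 fun _ _ h => h.2.2.1.ne rfl)

end Crossings

section Window

theorem _root_.SLInstance.eq_of_not_disjoint {k : ℕ} {E F : Finset α} (hE : (k, E) ∈ P.inters)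
    (hF : (k, F) ∈ P.inters) (h : ¬ Disjoint E F) : E = F := by
  by_contra hne
  exact h (P.disj _ hE _ hF rfl (by simp [hne]))

def QuietAt (P : SLInstance α) (C : Finset α) (k : ℕ) : Prop :=
  (∀ p ∈ P.inters, p.1 = k → Disjoint p.2 C) ∨ ∃ p ∈ P.inters, p.1 = k ∧ C ⊆ p.2

theorem QuietAt.mono {C D : Finset α} {k : ℕ} (h : QuietAt P C k) (hDC : D ⊆ C) :
    QuietAt P D k :=
  h.imp (fun h p hp hk => (h p hp hk).mono_right hDC) fun ⟨p, hp, hk, hCp⟩ =>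
    ⟨p, hp, hk, hDC.trans hCp⟩

structure IsQuietWindow (P : SLInstance α) (C : Finset α) (i j : ℕ) : Prop where
  left : (i, C) ∈ P.inters
  right : (j, C) ∈ P.inters
  lt : i < j
  quiet : ∀ k, i < k → k < j → QuietAt P C k

theorem QuietAt.subset_of_not_disjoint {C E : Finset α} {k : ℕ} (h : QuietAt P C k)
    (hE : (k, E) ∈ P.inters) (hEC : ¬ Disjoint E C) : C ⊆ E := by
  rcases h with h | ⟨⟨k', F⟩, hF, rfl, hCF⟩
  · exact absurd (h _ hE rfl) hEC
  · rwa [P.eq_of_not_disjoint hE hF fun h => hEC (h.mono_right hCF)]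

namespace IsQuietWindow

variable {C : Finset α} {i j k : ℕ}

theorem subset_AC (hW : IsQuietWindow P C i j) (h₁ : i ≤ k) (h₂ : k ≤ j) : C ⊆ P.AC k :=
  fun x hx => P.consecA x i k j h₁ h₂ ((P.valid _ hW.left).2 hx) ((P.valid _ hW.right).2 hx)

theorem subset_of_not_disjoint (hW : IsQuietWindow P C i j) (h₁ : i < k) (h₂ : k < j)
    {E : Finset α} (hE : (k, E) ∈ P.inters) (hEC : ¬ Disjoint E C) : C ⊆ E :=
  (hW.quiet k h₁ h₂).subset_of_not_disjoint hE hEC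

theorem union {a b : ℕ} (hW : IsQuietWindow P C i j) (hW' : IsQuietWindow P C a b)
    (h₁ : a < j) (h₂ : i < b) : IsQuietWindow P C (min i a) (max j b) where
  left := by rcases min_choice i a with h | h <;> rw [h] <;> [exact hW.left; exact hW'.left]
  right := by rcases max_choice j b with h | h <;> rw [h] <;> [exact hW.right; exact hW'.right]
  lt := by omega
  quiet k hk₁ hk₂ := by
    by_cases hk : i < k ∧ k < j
    · exact hW.quiet k hk.1 hk.2
    · exact hW'.quiet k (by omega) (by omega)

theorem exists_maximal (hW : IsQuietWindow P C i j) :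
    ∃ I J, I ≤ i ∧ j ≤ J ∧ IsQuietWindow P C I J ∧
      ∀ a b, IsQuietWindow P C a b → b ≤ I ∨ J ≤ a ∨ (I ≤ a ∧ b ≤ J) := by
  classical
  let W := (Finset.range P.len ×ˢ Finset.range P.len).filter fun q =>
    q.1 ≤ i ∧ j ≤ q.2 ∧ IsQuietWindow P C q.1 q.2
  have mem_W : ∀ {a b}, a ≤ i → j ≤ b → IsQuietWindow P C a b → (a, b) ∈ W := fun ha hb h => by
    have hi := (P.valid _ hW.left).1
    simp only [W, Finset.mem_filter, Finset.mem_product, Finset.mem_range]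
    exact ⟨⟨by omega, (P.valid _ h.right).1⟩, ha, hb, h⟩
  obtain ⟨⟨I, J⟩, hIJ, hmax⟩ := W.exists_max_image (fun q => q.2 - q.1) ⟨_, mem_W le_rfl le_rfl hW⟩
  simp only [W, Finset.mem_filter] at hIJ
  obtain ⟨-, hI, hJ, hWIJ⟩ := hIJ
  refine ⟨I, J, hI, hJ, hWIJ, fun a b hab => ?_⟩
  by_contra! h
  have hlen := hmax _ (mem_W (by omega) (by omega) (hWIJ.union hab (by omega) (by omega)))
  have := hab.lt
  omega

end IsQuietWindow

end Window

section Regroup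

variable (S : SLSolution P) {C D : Finset α} {I J i j k t : ℕ} {cs : α}

def regroupOrd (C : Finset α) (I J : ℕ) (cs : α) (k : ℕ) : List α :=
  if I < k ∧ k < J then gather C cs (restrict (S.ord I) C) (S.ord k) else S.ord k

variable {S}

theorem regroupOrd_of_mem (h : I < k ∧ k < J) :
    regroupOrd S C I J cs k = gather C cs (restrict (S.ord I) C) (S.ord k) :=
  if_pos h

theorem regroupOrd_of_not_mem (h : ¬ (I < k ∧ k < J)) : regroupOrd S C I J cs k = S.ord k :=
  if_neg h

def weight (S : SLSolution P) (C : Finset α) (I J : ℕ) (c : α) : ℕ :=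
  ∑ x ∈ (Finset.Icc I J).biUnion P.AC \ C, (crossings S I J c x + crossings S I J x c)

namespace IsQuietWindow

variable (hW : IsQuietWindow P C I J) (hcs : cs ∈ C)
include hW

theorem toFinset_restrict_left : (restrict (S.ord I) C).toFinset = C :=
  toFinset_restrict (S.perm I ▸ hW.subset_AC le_rfl hW.lt.le)

include hcs

theorem mem_ord_of_mem (h₁ : I ≤ k) (h₂ : k ≤ J) : cs ∈ S.ord k :=
  S.mem_ord.2 (hW.subset_AC h₁ h₂ hcs)

variable (S) in
def regroup : SLSolution P where
  ord := regroupOrd S C I J cs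
  nodup k := by
    unfold regroupOrd
    split_ifs with h
    · exact nodup_gather (nodup_restrict (S.nodup I)) (fun x hx => (mem_restrict.1 hx).2)
        (S.nodup k) (hW.mem_ord_of_mem hcs h.1.le h.2.le)
    · exact S.nodup k
  perm k := by
    unfold regroupOrd
    split_ifs with h
    · rw [toFinset_gather hcs hW.toFinset_restrict_left (hW.mem_ord_of_mem hcs h.1.le h.2.le),
        S.perm]
      exact S.perm k ▸ hW.subset_AC h.1.le h.2.le
    · exact S.perm k
  consec := by
    rintro ⟨k, E⟩ hE
    by_cases h : I < k ∧ k < J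
    · rw [regroupOrd_of_mem h]
      refine (S.consec _ hE).gather (S.nodup k) hcs hW.toFinset_restrict_left ?_
      by_cases hEC : Disjoint E C
      · exact .inl hEC
      · exact .inr (hW.subset_of_not_disjoint h.1 h.2 hE hEC)
    · rw [regroupOrd_of_not_mem h]
      exact S.consec _ hE

theorem regroup_ord : (hW.regroup S hcs).ord k = regroupOrd S C I J cs k := rfl

theorem restrict_regroup_of_disjoint (hD : Disjoint D C) :
    restrict ((hW.regroup S hcs).ord k) D = restrict (S.ord k) D := by
  rw [regroup_ord]
  unfold regroupOrd
  split_ifs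
  · exact restrict_gather_of_disjoint hcs (fun x hx => (mem_restrict.1 hx).2) hD
  · rfl

theorem restrict_regroup_of_subset (hD : D ⊆ C) (h₁ : I ≤ k) (h₂ : k < J) :
    restrict ((hW.regroup S hcs).ord k) D = restrict (S.ord I) D := by
  rw [regroup_ord]
  unfold regroupOrd
  split_ifs with h
  · rw [restrict_gather_of_subset (S.nodup k) (hW.mem_ord_of_mem hcs h.1.le h.2.le) hD,
      restrict_restrict_of_subset hD]
  · rw [show k = I by omega]

theorem restrict_regroup_of_superset (hD : C ⊆ D) (h : I < k ∧ k < J) :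
    restrict ((hW.regroup S hcs).ord k) D =
      gather C cs (restrict (S.ord I) C) (restrict (S.ord k) D) := by
  rw [regroup_ord, regroupOrd_of_mem h]
  exact restrict_gather_of_superset hcs (fun x hx => (mem_restrict.1 hx).2) hD

theorem restrict_isInfix_regroup (h : I < k ∧ k < J) :
    restrict (S.ord I) C <:+: (hW.regroup S hcs).ord k := by
  rw [regroup_ord, regroupOrd_of_mem h]
  exact isInfix_gather (S.nodup k) (hW.mem_ord_of_mem hcs h.1.le h.2.le)

theorem precedes_regroup_iff_of_not_mem {x y : α} (hx : x ∉ C) (hy : y ∉ C) :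
    Precedes ((hW.regroup S hcs).ord k) x y ↔ Precedes (S.ord k) x y := by
  have hD : Disjoint {x, y} C := by simp [hx, hy]
  rw [← precedes_restrict_iff (D := {x, y}) (by simp) (by simp),
    hW.restrict_regroup_of_disjoint hcs hD, precedes_restrict_iff (by simp) (by simp)]

theorem precedes_regroup_iff_of_mem {c c' : α} (hc : c ∈ C) (hc' : c' ∈ C) (h₁ : I ≤ k)
    (h₂ : k < J) : Precedes ((hW.regroup S hcs).ord k) c c' ↔ Precedes (S.ord I) c c' := by
  have hD : {c, c'} ⊆ C := by simp [Finset.insert_subset_iff, hc, hc']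
  rw [← precedes_restrict_iff (D := {c, c'}) (by simp) (by simp),
    hW.restrict_regroup_of_subset hcs hD h₁ h₂, precedes_restrict_iff (by simp) (by simp)]

theorem precedes_regroup_iff_of_mem_of_not_mem {c x : α} (hc : c ∈ C) (hx : x ∉ C)
    (h₁ : I ≤ k) (h₂ : k ≤ J) :
    (Precedes ((hW.regroup S hcs).ord k) c x ↔ Precedes (S.ord k) cs x) ∧
      (Precedes ((hW.regroup S hcs).ord k) x c ↔ Precedes (S.ord k) x cs) := by
  rw [regroup_ord]
  unfold regroupOrd
  split_ifs with h
  · exact precedes_gather_iff_of_mem_of_not_mem hcs (nodup_restrict (S.nodup I))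
      hW.toFinset_restrict_left (S.nodup k) (hW.mem_ord_of_mem hcs h.1.le h.2.le) hc hx
  · have hk : (k, C) ∈ P.inters := by
      rcases (show k = I ∨ k = J by omega) with rfl | rfl
      exacts [hW.left, hW.right]
    exact (S.consec _ hk).precedes_iff (S.nodup k) hcs hc hx

theorem crossings_regroup_of_not_mem {x y : α} (hx : x ∉ C) (hy : y ∉ C) :
    crossings (hW.regroup S hcs) I J x y = crossings S I J x y := by
  unfold crossings
  congr 1
  refine Finset.filter_congr fun k _ => ?_
  unfold CrossesAt
  rw [hW.precedes_regroup_iff_of_not_mem hcs hx hy, hW.precedes_regroup_iff_of_not_mem hcs hy hx]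

theorem crossings_regroup_of_mem_of_not_mem {c x : α} (hc : c ∈ C) (hx : x ∉ C) :
    crossings (hW.regroup S hcs) I J c x = crossings S I J cs x ∧
      crossings (hW.regroup S hcs) I J x c = crossings S I J x cs := by
  have key : ∀ k ∈ Finset.Ico I J,
      (CrossesAt (hW.regroup S hcs) k c x ↔ CrossesAt S k cs x) ∧
        (CrossesAt (hW.regroup S hcs) k x c ↔ CrossesAt S k x cs) := fun k hk => by
    obtain ⟨h₁, h₂⟩ := Finset.mem_Ico.1 hk
    have hcom : ∀ d ∈ C, d ∈ P.AC k ∩ P.AC (k + 1) := fun d hd =>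
      Finset.mem_inter.2 ⟨hW.subset_AC h₁ h₂.le hd, hW.subset_AC (by omega) h₂ hd⟩
    obtain ⟨e₁, e₂⟩ := hW.precedes_regroup_iff_of_mem_of_not_mem (S := S) hcs hc hx h₁ h₂.le
    obtain ⟨e₃, e₄⟩ := hW.precedes_regroup_iff_of_mem_of_not_mem (S := S) hcs hc hx (k := k + 1)
      (by omega) h₂
    simp only [CrossesAt, e₁, e₂, e₃, e₄, hcom c hc, hcom cs hcs, true_and]
  exact ⟨congrArg Finset.card (Finset.filter_congr fun k hk => (key k hk).1),
    congrArg Finset.card (Finset.filter_congr fun k hk => (key k hk).2)⟩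

theorem crossings_regroup_of_mem {c c' : α} (hc : c ∈ C) (hc' : c' ∈ C) :
    crossings (hW.regroup S hcs) I J c c' + crossings (hW.regroup S hcs) I J c' c ≤
      crossings S I J c c' + crossings S I J c' c := by
  by_cases hcc' : c = c'
  · simp [hcc', crossings_self]
  have hcom : ∀ k ∈ Finset.Ico I J, ∀ d ∈ C, d ∈ P.AC k ∩ P.AC (k + 1) := fun k hk d hd => by
    obtain ⟨h₁, h₂⟩ := Finset.mem_Ico.1 hk
    exact Finset.mem_inter.2 ⟨hW.subset_AC h₁ h₂.le hd, hW.subset_AC (by omega) h₂ hd⟩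
  have hmem : ∀ k ∈ Finset.Ico I J, _ := fun k hk => And.intro (hcom k hk c hc) (hcom k hk c' hc')
  rw [crossings_add_crossings_eq_flips _ hcc' hmem, crossings_add_crossings_eq_flips _ hcc' hmem]
  have hend : ∀ k, ¬ (I < k ∧ k < J) → (hW.regroup S hcs).ord k = S.ord k := fun k h =>
    regroupOrd_of_not_mem h
  refine flips_le_flips hW.lt (fun k h₁ h₂ => ?_) (by rw [hend I (by omega)])
    (by rw [hend J (by omega)])
  rw [hW.precedes_regroup_iff_of_mem hcs hc hc' h₁ h₂, hend I (by omega)]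

theorem crS_regroup_le (hmin : ∀ c ∈ C, weight S C I J cs ≤ weight S C I J c) :
    crS P (hW.regroup S hcs) ≤ crS P S := by
  set T := (Finset.Icc I J).biUnion P.AC
  have hCT : C ⊆ T := fun c hc => Finset.mem_biUnion.2
    ⟨I, Finset.mem_Icc.2 ⟨le_rfl, hW.lt.le⟩, hW.subset_AC le_rfl hW.lt.le hc⟩
  have hT : ∀ k ∈ Finset.Ico I J, P.AC k ∩ P.AC (k + 1) ⊆ T := fun k hk x hx => by
    obtain ⟨h₁, h₂⟩ := Finset.mem_Ico.1 hk
    exact Finset.mem_biUnion.2 ⟨k, Finset.mem_Icc.2 ⟨h₁, h₂.le⟩, (Finset.mem_inter.1 hx).1⟩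
  refine crS_le_crS_of_window (P.valid _ hW.right).1 hT
    (fun k hk => regroupOrd_of_not_mem (by omega)) ?_
  rw [sum_product_eq_blocks hCT, sum_product_eq_blocks hCT]
  gcongr ?_ + ?_ + ?_
  · refine le_of_eq (Finset.sum_congr rfl fun x hx => Finset.sum_congr rfl fun y hy => ?_)
    exact hW.crossings_regroup_of_not_mem hcs (Finset.mem_sdiff.1 hx).2 (Finset.mem_sdiff.1 hy).2
  · calc ∑ c ∈ C, ∑ x ∈ T \ C,
          (crossings (hW.regroup S hcs) I J c x + crossings (hW.regroup S hcs) I J x c)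
        = ∑ c ∈ C, weight S C I J cs := Finset.sum_congr rfl fun c hc =>
          Finset.sum_congr rfl fun x hx => by
            obtain ⟨e₁, e₂⟩ :=
              hW.crossings_regroup_of_mem_of_not_mem hcs hc (Finset.mem_sdiff.1 hx).2
            rw [e₁, e₂]
      _ ≤ ∑ c ∈ C, weight S C I J c := by
          rw [Finset.sum_const, smul_eq_mul]
          exact Finset.card_nsmul_le_sum C _ _ hmin
  · exact sum_sum_le_of_add_swap_le fun c hc c' hc' => hW.crossings_regroup_of_mem hcs hc hc'

theorem isInfix_regroup_of_le (hi : I ≤ i) (hk : i < k) (hkJ : k < J) :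
    restrict ((hW.regroup S hcs).ord i) C <:+: (hW.regroup S hcs).ord k := by
  rw [hW.restrict_regroup_of_subset hcs subset_rfl hi (by omega)]
  exact hW.restrict_isInfix_regroup hcs ⟨by omega, hkJ⟩

theorem isInfix_regroup_of_disjoint (hD : Disjoint D C)
    (h : restrict (S.ord i) D <:+: S.ord k) :
    restrict ((hW.regroup S hcs).ord i) D <:+: (hW.regroup S hcs).ord k := by
  rw [hW.restrict_regroup_of_disjoint hcs hD, regroup_ord]
  unfold regroupOrd
  split_ifs
  · have hfix : gather C cs (restrict (S.ord I) C) (restrict (S.ord i) D) = restrict (S.ord i) D :=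
      gather_eq_self hcs fun x hx => Finset.disjoint_left.1 hD (mem_restrict.1 hx).2
    have : gather C cs (restrict (S.ord I) C) (restrict (S.ord i) D) <:+:
        gather C cs (restrict (S.ord I) C) (S.ord k) := h.flatMap _
    rwa [hfix] at this
  · exact h

theorem isInfix_regroup_of_superset (hCD : C ⊆ D) (hi : I < i) (hk : i < k) (hkJ : k < J)
    (h : restrict (S.ord i) D <:+: S.ord k) :
    restrict ((hW.regroup S hcs).ord i) D <:+: (hW.regroup S hcs).ord k := by
  rw [hW.restrict_regroup_of_superset hcs hCD ⟨hi, by omega⟩, regroup_ord,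
    regroupOrd_of_mem ⟨by omega, hkJ⟩]
  exact h.flatMap _

theorem isInfix_regroup_of_subset (hDC : D ⊆ C) (hi : i < I) (hk : I < k) (hkJ : k < J)
    (h : restrict (S.ord i) D <:+: S.ord I) :
    restrict ((hW.regroup S hcs).ord i) D <:+: (hW.regroup S hcs).ord k := by
  rw [regroup_ord, regroupOrd_of_not_mem (by omega)]
  refine (isInfix_restrict h fun x hx => hDC (mem_restrict.1 hx).2).trans ?_
  exact hW.restrict_isInfix_regroup hcs ⟨hk, hkJ⟩

theorem isInfix_regroup_of_isInfix
    (hmax : ∀ a b, IsQuietWindow P C a b → b ≤ I ∨ J ≤ a ∨ (I ≤ a ∧ b ≤ J))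
    (hsmall : ∀ i j D, IsQuietWindow P D i j → D.card < C.card →
      ∀ k, i < k → k < j → restrict (S.ord i) D <:+: S.ord k)
    (hD : IsQuietWindow P D i j) (hik : i < k) (hkj : k < j)
    (h : restrict (S.ord i) D <:+: S.ord k) :
    restrict ((hW.regroup S hcs).ord i) D <:+: (hW.regroup S hcs).ord k := by
  have hout : ∀ m, ¬ (I < m ∧ m < J) → (hW.regroup S hcs).ord m = S.ord m := fun m hm =>
    regroupOrd_of_not_mem hm
  by_cases hDC : D = C
  · subst hDC
    rcases hmax i j hD with hj | hi | ⟨hi, hj⟩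
    · rwa [hout i (by omega), hout k (by omega)]
    · rwa [hout i (by omega), hout k (by omega)]
    · exact hW.isInfix_regroup_of_le hcs hi hik (by omega)
  by_cases hdisj : Disjoint D C
  · exact hW.isInfix_regroup_of_disjoint hcs hdisj h
  by_cases hi : I < i ∧ i < J
  · have hCD := hW.subset_of_not_disjoint hi.1 hi.2 hD.left hdisj
    have hkJ : k < J := by
      by_contra hkJ
      exact hDC ((hD.subset_of_not_disjoint (k := J) (by omega) (by omega) hW.right
        fun h' => hdisj h'.symm).antisymm hCD)
    exact hW.isInfix_regroup_of_superset hcs hCD hi.1 hik hkJ h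
  by_cases hk : I < k ∧ k < J
  · have hiI : i < I := by
      rcases Nat.lt_or_eq_of_le (show i ≤ I by omega) with hiI | rfl
      · exact hiI
      · exact absurd (P.eq_of_not_disjoint hD.left hW.left hdisj) hDC
    have hDC' := hD.subset_of_not_disjoint hiI (by omega) hW.left fun h' => hdisj h'.symm
    refine hW.isInfix_regroup_of_subset hcs hDC' hiI hk.1 hk.2 ?_
    exact hsmall i j D hD (Finset.card_lt_card (hDC'.ssubset_of_ne hDC)) I hiI (by omega)
  · rwa [hout i hi, hout k hk]

theorem restrict_regroup_eq_of_superset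
    (hO : ∀ m, j ≤ m → m ≤ t → restrict (S.ord m) D = restrict (S.ord t) D) (hCD : C ⊆ D)
    (hIt : I < t) (htJ : t < J) {m : ℕ} (h₁ : j ≤ m) (h₂ : m ≤ t) :
    restrict ((hW.regroup S hcs).ord m) D = restrict ((hW.regroup S hcs).ord t) D := by
  have key : ∀ m, j ≤ m → m ≤ t → restrict ((hW.regroup S hcs).ord m) D =
      gather C cs (restrict (S.ord I) C) (restrict (S.ord t) D) := fun m h₁ h₂ => by
    by_cases hIm : I < m
    · rw [hW.restrict_regroup_of_superset hcs hCD ⟨hIm, by omega⟩, hO m h₁ h₂]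
    · rw [regroup_ord, regroupOrd_of_not_mem (by omega), hO m h₁ h₂, ← hO I (by omega) hIt.le,
        (S.consec _ hW.left).gather_restrict (S.nodup I) hcs hCD]
  rw [key m h₁ h₂, key t (h₁.trans h₂) le_rfl]

theorem restrict_regroup_eq_of_subset
    (hO : ∀ m, j ≤ m → m ≤ t → restrict (S.ord m) D = restrict (S.ord t) D) (hDC : D ⊆ C)
    (hJt : J ≤ t) (hIt : restrict (S.ord I) D = restrict (S.ord t) D) {m : ℕ} (h₁ : j ≤ m)
    (h₂ : m ≤ t) :
    restrict ((hW.regroup S hcs).ord m) D = restrict ((hW.regroup S hcs).ord t) D := by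
  rw [regroup_ord (k := t), regroupOrd_of_not_mem (by omega)]
  by_cases hm : I < m ∧ m < J
  · rw [hW.restrict_regroup_of_subset hcs hDC hm.1.le hm.2, hIt]
  · rw [regroup_ord, regroupOrd_of_not_mem hm, hO m h₁ h₂]

theorem type1Consistent_regroup (hS : Type1Consistent P S) :
    Type1Consistent P (hW.regroup S hcs) := by
  rintro ⟨t, D⟩ htD j hjt hact hq m h₁ h₂
  have hO := hS (t, D) htD j hjt hact hq
  dsimp only at hO hjt hact hq h₂ ⊢
  by_cases hout : t ≤ I ∨ J ≤ j
  · rw [regroup_ord, regroup_ord, regroupOrd_of_not_mem (by omega),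
      regroupOrd_of_not_mem (by omega)]
    exact hO m h₁ h₂
  by_cases hdisj : Disjoint D C
  · rw [hW.restrict_regroup_of_disjoint hcs hdisj, hW.restrict_regroup_of_disjoint hcs hdisj]
    exact hO m h₁ h₂
  by_cases htJ : t < J
  · exact hW.restrict_regroup_eq_of_superset hcs hO
      (hW.subset_of_not_disjoint (by omega) htJ htD hdisj) (by omega) htJ h₁ h₂
  have hDC : D ⊆ C := QuietAt.subset_of_not_disjoint (hq J (by omega) (by omega)) hW.right
    fun h => hdisj h.symm
  have hIt : restrict (S.ord I) D = restrict (S.ord t) D := by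
    by_cases hjI : j ≤ I
    · exact hO I hjI (by omega)
    refine hS (t, D) htD I (by omega) (fun k hk₁ hk₂ => ?_) (fun k hk₁ hk₂ => ?_) I le_rfl
      (by omega)
    · by_cases hjk : j ≤ k
      · exact hact k hjk hk₂
      · exact hDC.trans (hW.subset_AC hk₁ (by omega))
    · by_cases hjk : j < k
      · exact hq k hjk hk₂
      · exact (hW.quiet k hk₁ (by omega)).mono hDC
  exact hW.restrict_regroup_eq_of_subset hcs hO hDC (by omega) hIt h₁ h₂

end IsQuietWindow

end Regroup

section Violations

variable {S : SLSolution P}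

open Classical in
noncomputable def violations (S : SLSolution P) : Finset (ℕ × ℕ × Finset α × ℕ) :=
  (Finset.range P.len ×ˢ Finset.range P.len ×ˢ P.inters.image Prod.snd ×ˢ Finset.range P.len).filter
    fun ⟨i, j, C, k⟩ => IsQuietWindow P C i j ∧ i < k ∧ k < j ∧ ¬ restrict (S.ord i) C <:+: S.ord k

theorem mem_violations {i j k : ℕ} {C : Finset α} :
    (i, j, C, k) ∈ violations S ↔
      IsQuietWindow P C i j ∧ i < k ∧ k < j ∧ ¬ restrict (S.ord i) C <:+: S.ord k := by
  simp only [violations, Finset.mem_filter, Finset.mem_product, Finset.mem_range,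
    Finset.mem_image, and_iff_right_iff_imp]
  rintro ⟨hW, -, hkj, -⟩
  have hj := (P.valid _ hW.right).1
  exact ⟨(P.valid _ hW.left).1, hj, ⟨_, hW.left, rfl⟩, by omega⟩

theorem type2Consistent_of_violations_eq_empty (h : violations S = ∅) : Type2Consistent P S := by
  intro i j C hi hj hij hq k hik hkj
  by_contra hne
  have : (i, j, C, k) ∈ violations S :=
    mem_violations.2 ⟨⟨hi, hj, hij, hq⟩, hik, hkj, fun ⟨a, b, hab⟩ => hne ⟨a, b, hab.symm⟩⟩
  simp [h] at this

theorem exists_fewer_violations (h : (violations S).Nonempty) :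
    ∃ S' : SLSolution P, (violations S').card < (violations S).card ∧ crS P S' ≤ crS P S ∧
      (Type1Consistent P S → Type1Consistent P S') := by
  obtain ⟨⟨i₀, j₀, C, k₀⟩, hmem, hmin⟩ := (violations S).exists_min_image (fun t => t.2.2.1.card) h
  obtain ⟨hW₀, hik₀, hkj₀, hbad⟩ := mem_violations.1 hmem
  obtain ⟨I, J, hI, hJ, hW, hmax⟩ := hW₀.exists_maximal
  have hC : C.Nonempty := by
    by_contra hC
    rw [Finset.not_nonempty_iff_eq_empty] at hC
    exact hbad (by simp [hC, restrict_eq_nil])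
  obtain ⟨cs, hcs, hcsmin⟩ := C.exists_min_image (weight S C I J) hC
  refine ⟨hW.regroup S hcs, Finset.card_lt_card ?_, hW.crS_regroup_le hcs hcsmin,
    hW.type1Consistent_regroup hcs⟩
  have hsmall : ∀ i j D, IsQuietWindow P D i j → D.card < C.card →
      ∀ k, i < k → k < j → restrict (S.ord i) D <:+: S.ord k := fun i j D hD hcard k hik hkj => by
    by_contra hne
    exact hcard.not_ge (hmin _ (mem_violations.2 ⟨hD, hik, hkj, hne⟩))
  have hsub : violations (hW.regroup S hcs) ⊆ violations S := fun ⟨i, j, D, k⟩ ht => by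
    obtain ⟨hD, hik, hkj, hne⟩ := mem_violations.1 ht
    exact mem_violations.2 ⟨hD, hik, hkj, fun h' =>
      hne (hW.isInfix_regroup_of_isInfix hcs hmax hsmall hD hik hkj h')⟩
  refine (Finset.ssubset_iff_of_subset hsub).2 ⟨_, hmem, fun ht => ?_⟩
  exact (mem_violations.1 ht).2.2.2 (hW.isInfix_regroup_of_le hcs hI hik₀ (by omega))

end Violations

end Storyline

/-- From any solution `S` of a storyline instance one can construct a
type-2-consistent solution `S'` with `cr(S') ≤ cr(S)`; moreover, if `S` is
type-1-consistent then `S'` can be taken type-1-consistent as well. -/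
theorem exists_type2_consistent_le {α : Type*} [DecidableEq α]
    (P : SLInstance α) (S : SLSolution P) :
    ∃ S' : SLSolution P, Type2Consistent P S' ∧ crS P S' ≤ crS P S ∧
      (Type1Consistent P S → Type1Consistent P S') := by
  induction hn : (Storyline.violations S).card using Nat.strong_induction_on generalizing S with
  | _ n ih =>
    rcases (Storyline.violations S).eq_empty_or_nonempty with h | h
    · exact ⟨S, Storyline.type2Consistent_of_violations_eq_empty h, le_rfl, id⟩
    · obtain ⟨S₁, hlt, hcr, hT₁⟩ := Storyline.exists_fewer_violations h
      obtain ⟨S', h₂, hcr', hT₁'⟩ := ih _ (hn ▸ hlt) S₁ rfl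
      exact ⟨S', h₂, hcr'.trans hcr, hT₁' ∘ hT₁⟩
end

section
/- Every storyline instance has a crossing-minimum solution S = (π₁,…,π_ℓ) such that for every time step tᵢ (i ≥ 2) carrying exactly one interaction I: πᵢ decomposes as πᵢ = πᵢ[C_a] ⋆ πᵢ[char(I)] ⋆ πᵢ[C_b] for some sets C_a, C_b, and (a) if C_a ⊆ AC(t_{i−1}) ∩ AC(tᵢ) then πᵢ[C_a] = π_{i−1}[C_a]; (b) if char(I) ⊆ AC(t_{i−1}) ∩ AC(tᵢ) then πᵢ[char(I)] = π_{i−1}[char(I)]; (c) if C_b ⊆ AC(t_{i−1}) ∩ AC(tᵢ) then πᵢ[C_b] = π_{i−1}[C_b]. -/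
/-!
Among the crossing-minimal solutions choose one that also minimises the weighted crossing
number `∑ⱼ (len - j) · crⱼ`, where `crⱼ` counts the crossings between time steps `j` and `j + 1`.
Let `B` be one of the blocks `C_a`, `char(I)`, `C_b` of `πᵢ`, with `B ⊆ AC(i - 1)`. If
`πᵢ[B] ≠ πᵢ₋₁[B]`, two characters adjacent in `πᵢ[B]`, hence in `πᵢ`, appear in the opposite
order in `πᵢ₋₁`. Swapping them in `πᵢ` moves them inside `B`, so `char(I)` stays consecutive; it
removes exactly one crossing between `tᵢ₋₁` and `tᵢ` and adds at most one between `tᵢ` and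
`tᵢ₊₁`. Hence the crossing number does not increase while the weighted one drops, the earlier
gap carrying the larger weight.
-/

namespace List

variable {α : Type*} [DecidableEq α]

theorem idxOf_append_cons_cons (u v : List α) (x y a : α) :
    (u ++ x :: y :: v).idxOf a =
      if a ∈ u then u.idxOf a
      else if a = x then u.length
      else if a = y then u.length + 1
      else u.length + 2 + v.idxOf a := by
  grind

theorem idxOf_lt_idxOf_append_swap_iff {u v : List α} {x y a b : α}
    (hxy : ¬(a = x ∧ b = y)) (hyx : ¬(a = y ∧ b = x)) :
    (u ++ y :: x :: v).idxOf a < (u ++ y :: x :: v).idxOf b ↔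
      (u ++ x :: y :: v).idxOf a < (u ++ x :: y :: v).idxOf b := by
  have ha := idxOf_lt_length_iff (a := a) (l := u)
  have hb := idxOf_lt_length_iff (a := b) (l := u)
  simp only [idxOf_append_cons_cons]
  split_ifs <;> simp_all <;> omega

theorem Nodup.pair_sublist_iff {l : List α} (hl : l.Nodup) {a b : α} (ha : a ∈ l) (hb : b ∈ l)
    (hab : a ≠ b) : [a, b] <+ l ↔ l.idxOf a < l.idxOf b := by
  induction l with
  | nil => simp at ha
  | cons c l ih => grind

theorem exists_adjacent_inversion {l₁ l₂ : List α} (h₁ : l₁.Nodup) (hp : l₁ ~ l₂)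
    (hne : l₁ ≠ l₂) : ∃ u x y v, l₂ = u ++ x :: y :: v ∧ l₁.idxOf y < l₁.idxOf x := by
  by_contra! h
  let r a b := l₁.idxOf a ≤ l₁.idxOf b
  have : Trans r r r := ⟨le_trans⟩
  have h₂ : l₂.Pairwise r := isChain_iff_pairwise.mp
    (isChain_iff_forall_rel_of_append_cons_cons.mpr fun _ _ _ _ e => h _ _ _ _ e)
  have h₁' : l₁.Pairwise r := pairwise_iff_getElem.mpr fun i j hi hj hij => by
    simp only [r, h₁.idxOf_getElem]
    omega
  exact hne (hp.eq_of_pairwise (fun a b ha _ hab hba => (idxOf_inj ha).mp (le_antisymm hab hba))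
    h₁' h₂)

end List

theorem Finset.sum_range_mul_add_le_of_transfer {n k : ℕ} (hk : k < n) {w f g : ℕ → ℕ}
    (hgk : g k + 1 = f k) (hgk1 : g (k + 1) ≤ f (k + 1) + 1)
    (hg : ∀ m, m ≠ k → m ≠ k + 1 → g m = f m) :
    ∑ m ∈ range n, w m * g m + w k ≤ ∑ m ∈ range n, w m * f m + w (k + 1) := by
  have hpt : ∀ m ∈ range n, w m * g m + (if m = k then w k else 0) ≤
      w m * f m + (if m = k + 1 then w (k + 1) else 0) := by
    intro m _
    rcases eq_or_ne m k with rfl | hmk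
    · simp [← hgk, mul_add]
    rcases eq_or_ne m (k + 1) with rfl | hmk1
    · simpa [mul_add] using Nat.mul_le_mul_left (w (k + 1)) hgk1
    simp [hmk, hmk1, hg m hmk hmk1]
  have hsum := sum_le_sum hpt
  rw [sum_add_distrib, sum_add_distrib, sum_ite_eq', sum_ite_eq', if_pos (mem_range.2 hk)] at hsum
  split_ifs at hsum <;> omega

theorem exists_lex_min {β : Type*} [Nonempty β] (f g : β → ℕ) :
    ∃ b, (∀ b', f b ≤ f b') ∧ ∀ b', f b' = f b → g b ≤ g b' := by
  obtain ⟨b, -, hb⟩ := (InvImage.wf (fun b => toLex (f b, g b)) wellFounded_lt).has_min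
    Set.univ ⟨Classical.arbitrary β, trivial⟩
  have hb' : ∀ b', ¬(f b' < f b ∨ f b' = f b ∧ g b' < g b) := fun b' =>
    (Prod.Lex.toLex_lt_toLex).not.mp (hb b' trivial)
  exact ⟨b, fun b' => by grind, fun b' => by grind⟩

section Restrict

variable {α : Type*} [DecidableEq α]

theorem restrict_append (l₁ l₂ : List α) (Z : Finset α) :
    restrict (l₁ ++ l₂) Z = restrict l₁ Z ++ restrict l₂ Z :=
  List.filter_append _ _

theorem restrict_cons_of_mem (l : List α) {Z : Finset α} {a : α} (h : a ∈ Z) :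
    restrict (a :: l) Z = a :: restrict l Z :=
  List.filter_cons_of_pos (decide_eq_true h)

theorem restrict_cons_of_notMem (l : List α) {Z : Finset α} {a : α} (h : a ∉ Z) :
    restrict (a :: l) Z = restrict l Z :=
  List.filter_cons_of_neg (by simpa using h)

@[simp]
theorem mem_restrict {l : List α} {Z : Finset α} {a : α} : a ∈ restrict l Z ↔ a ∈ l ∧ a ∈ Z := by
  simp [restrict]

theorem List.Nodup.idxOf_restrict_lt_idxOf_restrict_iff {w : List α} (hw : w.Nodup)
    {Z : Finset α} {a b : α} (ha : a ∈ w) (hb : b ∈ w) (haZ : a ∈ Z) (hbZ : b ∈ Z) (hab : a ≠ b) :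
    (restrict w Z).idxOf a < (restrict w Z).idxOf b ↔ w.idxOf a < w.idxOf b := by
  have hZ : (restrict w Z).Nodup := hw.filter _
  rw [← hZ.pair_sublist_iff (mem_restrict.mpr ⟨ha, haZ⟩) (mem_restrict.mpr ⟨hb, hbZ⟩) hab,
    ← hw.pair_sublist_iff ha hb hab]
  refine ⟨fun h => h.trans List.filter_sublist, fun h => ?_⟩
  simpa [restrict, haZ, hbZ] using h.filter (· ∈ Z)

theorem toFinset_restrict (l : List α) (Z : Finset α) :
    (restrict l Z).toFinset = l.toFinset ∩ Z := by
  ext; simp [restrict]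

theorem List.IsInfix.restrict_toFinset {l m : List α} (h : m <:+: l) (hl : l.Nodup) :
    restrict l m.toFinset = m := by
  obtain ⟨p, s, rfl⟩ := h
  simp only [List.nodup_append, List.mem_append] at hl
  simp only [restrict, List.filter_append]
  rw [(List.filter_eq_nil_iff (l := p)).mpr (by grind [List.mem_toFinset]),
    (List.filter_eq_self (l := m)).mpr (by simp),
    (List.filter_eq_nil_iff (l := s)).mpr (by grind [List.mem_toFinset]), List.nil_append,
    List.append_nil]

end Restrict

section Inversions

variable {α : Type*} [DecidableEq α]

theorem inv_append_swap_right {l u v : List α} {x y : α} (hnd : (u ++ x :: y :: v).Nodup)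
    (hx : x ∈ l) (hy : y ∈ l) (hyx : l.idxOf y < l.idxOf x) :
    inv l (u ++ x :: y :: v) = inv l (u ++ y :: x :: v) + 1 := by
  unfold inv
  rw [← Finset.card_insert_of_notMem (s := Finset.filter _ _) (a := (y, x)) ?_]
  · congr 1
    ext ⟨a, b⟩
    simp only [Finset.mem_insert, Finset.mem_filter, Finset.mem_product, List.mem_toFinset,
      Prod.mk.injEq]
    by_cases hab : a = y ∧ b = x
    · grind [List.idxOf_append_cons_cons]
    by_cases hba : a = x ∧ b = y
    · grind [List.idxOf_append_cons_cons]
    rw [List.idxOf_lt_idxOf_append_swap_iff (fun h => hba ⟨h.2, h.1⟩) (fun h => hab ⟨h.2, h.1⟩)]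
    tauto
  · grind [List.idxOf_append_cons_cons]

theorem inv_append_swap_left_le {l u v : List α} {x y : α} (hnd : (u ++ x :: y :: v).Nodup) :
    inv (u ++ y :: x :: v) l ≤ inv (u ++ x :: y :: v) l + 1 := by
  have hset : (u ++ y :: x :: v).toFinset = (u ++ x :: y :: v).toFinset := by
    ext; simp only [List.mem_toFinset, List.mem_append, List.mem_cons]; tauto
  unfold inv
  rw [hset]
  refine (Finset.card_le_card ?_).trans (Finset.card_insert_le (y, x) _)
  rintro ⟨a, b⟩
  simp only [Finset.mem_insert, Finset.mem_filter, Finset.mem_product, Prod.mk.injEq]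
  by_cases hab : a = y ∧ b = x
  · grind [List.idxOf_append_cons_cons]
  by_cases hba : a = x ∧ b = y
  · grind [List.idxOf_append_cons_cons]
  rw [List.idxOf_lt_idxOf_append_swap_iff hba hab]
  tauto

theorem inv_restrict_append_swap_left_le {l u v : List α} {x y : α} {K : Finset α}
    (hnd : (u ++ x :: y :: v).Nodup) :
    inv (restrict (u ++ y :: x :: v) K) l ≤ inv (restrict (u ++ x :: y :: v) K) l + 1 := by
  by_cases hx : x ∈ K <;> by_cases hy : y ∈ K
  · have hK : (restrict (u ++ x :: y :: v) K).Nodup := hnd.filter _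
    simp only [restrict_append, restrict_cons_of_mem _ hx, restrict_cons_of_mem _ hy] at hK ⊢
    exact inv_append_swap_left_le hK
  all_goals simp [restrict_append, restrict_cons_of_mem, restrict_cons_of_notMem, *]

end Inversions

namespace SLInstance

variable {α : Type*} [DecidableEq α] (P : SLInstance α)

noncomputable def interactionChars (i : ℕ) : List α :=
  (P.inters.filter (·.1 = i)).toList.flatMap fun p => p.2.toList

theorem nodup_interactionChars (i : ℕ) : (P.interactionChars i).Nodup := by
  refine List.nodup_flatMap.mpr ⟨fun p _ => Finset.nodup_toList _,
    (Finset.nodup_toList _).pairwise_of_forall_ne fun p hp q hq hpq => ?_⟩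
  simp only [Finset.mem_toList, Finset.mem_filter] at hp hq
  simpa [Function.onFun, List.disjoint_iff_ne, Finset.disjoint_left] using
    P.disj p hp.1 q hq.1 (hp.2.trans hq.2.symm) hpq

theorem toFinset_interactionChars_subset (i : ℕ) : (P.interactionChars i).toFinset ⊆ P.AC i := by
  intro a ha
  simp only [interactionChars, List.mem_toFinset, List.mem_flatMap, Finset.mem_toList,
    Finset.mem_filter] at ha
  obtain ⟨p, ⟨hp, rfl⟩, hap⟩ := ha
  exact (P.valid p hp).2 hap

noncomputable def blockOrd (i : ℕ) : List α :=
  P.interactionChars i ++ (P.AC i \ (P.interactionChars i).toFinset).toList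

instance : Nonempty (SLSolution P) := by
  refine ⟨⟨P.blockOrd, fun i => ?_, fun i => ?_, fun q hq => ?_⟩⟩
  · exact (P.nodup_interactionChars i).append (Finset.nodup_toList _) fun a h1 h2 => by simp_all
  · simpa [blockOrd] using P.toFinset_interactionChars_subset i
  · have hqL : q ∈ (P.inters.filter (·.1 = q.1)).toList := by simpa using hq
    obtain ⟨s, t, hst⟩ := List.append_of_mem hqL
    refine ⟨s.flatMap (·.2.toList), q.2.toList,
      t.flatMap (·.2.toList) ++ (P.AC q.1 \ (P.interactionChars q.1).toFinset).toList, ?_, by simp⟩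
    simp [blockOrd, interactionChars, hst]

def gapCrossings (o : ℕ → List α) (j : ℕ) : ℕ :=
  inv (restrict (o j) (P.AC j ∩ P.AC (j + 1))) (restrict (o (j + 1)) (P.AC j ∩ P.AC (j + 1)))

theorem crS_eq_sum_gapCrossings (S : SLSolution P) :
    crS P S = ∑ j ∈ Finset.range (P.len - 1), P.gapCrossings S.ord j :=
  rfl

def weightedCrossings (o : ℕ → List α) : ℕ :=
  ∑ j ∈ Finset.range (P.len - 1), (P.len - j) * P.gapCrossings o j

variable {P}

theorem gapCrossings_update_of_ne (o : ℕ → List α) {i j : ℕ} (l : List α) (hj : j ≠ i)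
    (hj' : j + 1 ≠ i) : P.gapCrossings (Function.update o i l) j = P.gapCrossings o j := by
  simp only [gapCrossings, Function.update_of_ne hj, Function.update_of_ne hj']

theorem gapCrossings_update_swap_succ_le (S : SLSolution P) {j : ℕ} {u v : List α} {x y : α}
    (hord : S.ord (j + 1) = u ++ x :: y :: v) :
    P.gapCrossings (Function.update S.ord (j + 1) (u ++ y :: x :: v)) (j + 1) ≤
      P.gapCrossings S.ord (j + 1) + 1 := by
  simp only [gapCrossings, Function.update_self,
    Function.update_of_ne (by omega : j + 1 + 1 ≠ j + 1), hord]
  exact inv_restrict_append_swap_left_le (hord ▸ S.nodup (j + 1))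

theorem gapCrossings_update_swap (S : SLSolution P) {j : ℕ} {u v : List α} {x y : α}
    (hord : S.ord (j + 1) = u ++ x :: y :: v) (hx : x ∈ P.AC j) (hy : y ∈ P.AC j)
    (hyx : (S.ord j).idxOf y < (S.ord j).idxOf x) :
    P.gapCrossings (Function.update S.ord (j + 1) (u ++ y :: x :: v)) j + 1 =
      P.gapCrossings S.ord j := by
  set K := P.AC j ∩ P.AC (j + 1)
  have hxK : x ∈ K := Finset.mem_inter.mpr ⟨hx, by simp [← S.perm (j + 1), hord]⟩
  have hyK : y ∈ K := Finset.mem_inter.mpr ⟨hy, by simp [← S.perm (j + 1), hord]⟩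
  have hxo : x ∈ S.ord j := by simpa [← S.perm j] using hx
  have hyo : y ∈ S.ord j := by simpa [← S.perm j] using hy
  have hxy : x ≠ y := by grind
  have hres : restrict (S.ord (j + 1)) K = restrict u K ++ x :: y :: restrict v K := by
    rw [hord, restrict_append, restrict_cons_of_mem _ hxK, restrict_cons_of_mem _ hyK]
  have hres' : restrict (u ++ y :: x :: v) K = restrict u K ++ y :: x :: restrict v K := by
    rw [restrict_append, restrict_cons_of_mem _ hyK, restrict_cons_of_mem _ hxK]
  have hnd : (restrict u K ++ x :: y :: restrict v K).Nodup := hres ▸ (S.nodup (j + 1)).filter _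
  simp only [gapCrossings, Function.update_self, Function.update_of_ne (by omega : j ≠ j + 1)]
  rw [hres, hres', inv_append_swap_right (x := x) (y := y) hnd (mem_restrict.mpr ⟨hxo, hxK⟩)
    (mem_restrict.mpr ⟨hyo, hyK⟩)]
  exact ((S.nodup j).idxOf_restrict_lt_idxOf_restrict_iff hyo hxo hyK hxK hxy.symm).mpr hyx

end SLInstance

namespace SLSolution

variable {α : Type*} [DecidableEq α] {P : SLInstance α}

theorem exists_ord_eq_update (S : SLSolution P) {i : ℕ} {l : List α} (hnd : l.Nodup)
    (hl : l.toFinset = P.AC i) (hcons : ∀ q ∈ P.inters, q.1 = i → ConsecutiveIn q.2 l) :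
    ∃ S' : SLSolution P, S'.ord = Function.update S.ord i l := by
  refine ⟨⟨Function.update S.ord i l, fun j => ?_, fun j => ?_, fun q hq => ?_⟩, rfl⟩
  · rcases eq_or_ne j i with rfl | h <;> simp [*, S.nodup]
  · rcases eq_or_ne j i with rfl | h <;> simp [*, S.perm]
  · rcases eq_or_ne q.1 i with h | h
    · simpa [h] using hcons q hq h
    · simpa [h] using S.consec q hq

def IsLexMinimal (S : SLSolution P) : Prop :=
  (∀ T : SLSolution P, crS P S ≤ crS P T) ∧
    ∀ T : SLSolution P, crS P T = crS P S → P.weightedCrossings S.ord ≤ P.weightedCrossings T.ord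

theorem exists_isLexMinimal (P : SLInstance α) : ∃ S : SLSolution P, S.IsLexMinimal :=
  exists_lex_min _ _

theorem IsLexMinimal.not_idxOf_lt_idxOf {S : SLSolution P} (hS : S.IsLexMinimal) {j : ℕ}
    (hj : j + 1 < P.len) {u v : List α} {x y : α} (hord : S.ord (j + 1) = u ++ x :: y :: v)
    (hx : x ∈ P.AC j) (hy : y ∈ P.AC j)
    (hcons : ∀ q ∈ P.inters, q.1 = j + 1 → ConsecutiveIn q.2 (u ++ y :: x :: v)) :
    ¬(S.ord j).idxOf y < (S.ord j).idxOf x := by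
  intro hyx
  have hperm : (u ++ x :: y :: v).Perm (u ++ y :: x :: v) := (List.Perm.swap y x v).append_left u
  obtain ⟨S', hS'⟩ := S.exists_ord_eq_update (hperm.nodup_iff.mp (hord ▸ S.nodup (j + 1)))
    ((List.toFinset_eq_of_perm _ _ hperm).symm.trans (hord ▸ S.perm (j + 1))) hcons
  have htransfer := fun w => Finset.sum_range_mul_add_le_of_transfer (w := w)
    (by omega : j < P.len - 1)
    (hS' ▸ SLInstance.gapCrossings_update_swap S hord hx hy hyx)
    (hS' ▸ SLInstance.gapCrossings_update_swap_succ_le S hord)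
    (fun m h h' => hS' ▸ SLInstance.gapCrossings_update_of_ne _ _ (by omega) (by omega))
  have hcr : crS P S' ≤ crS P S := by
    simpa [SLInstance.crS_eq_sum_gapCrossings] using htransfer 1
  have hw := hS.2 S' (le_antisymm hcr (hS.1 S'))
  have := htransfer (P.len - ·)
  simp only [SLInstance.weightedCrossings] at hw
  omega

theorem IsLexMinimal.restrict_eq_restrict {S : SLSolution P} (hS : S.IsLexMinimal) {j : ℕ}
    (hj : j + 1 < P.len) {pre mid suf : List α} (hord : S.ord (j + 1) = pre ++ mid ++ suf)
    (hcons : ∀ q ∈ P.inters, q.1 = j + 1 → ∀ mid' : List α, mid'.Perm mid →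
      ConsecutiveIn q.2 (pre ++ mid' ++ suf))
    (hsub : mid.toFinset ⊆ P.AC j) :
    restrict (S.ord (j + 1)) mid.toFinset = restrict (S.ord j) mid.toFinset := by
  have hnd : (pre ++ mid ++ suf).Nodup := hord ▸ S.nodup (j + 1)
  rw [hord, (List.infix_append pre mid suf).restrict_toFinset hnd]
  by_contra hne
  have hperm : (restrict (S.ord j) mid.toFinset).Perm mid :=
    List.perm_of_nodup_nodup_toFinset_eq ((S.nodup j).filter _) (hnd.sublist (by simp))
      (by rw [toFinset_restrict, S.perm, Finset.inter_eq_right.mpr hsub])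
  obtain ⟨u, x, y, v, rfl, hyx⟩ :=
    List.exists_adjacent_inversion ((S.nodup j).filter _) hperm (Ne.symm hne)
  have hx : x ∈ P.AC j := hsub (by simp)
  have hy : y ∈ P.AC j := hsub (by simp)
  have hxo : x ∈ S.ord j := by simpa [← S.perm j] using hx
  have hyo : y ∈ S.ord j := by simpa [← S.perm j] using hy
  refine hS.not_idxOf_lt_idxOf hj (u := pre ++ u) (v := v ++ suf) (by simp [hord]) hx hy
    (fun q hq hqi => by simpa using hcons q hq hqi _ ((List.Perm.swap x y v).append_left u)) ?_
  have hxy : x ≠ y := by grind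
  exact ((S.nodup j).idxOf_restrict_lt_idxOf_restrict_iff hyo hxo (by simp) (by simp)
    hxy.symm).mp hyx

end SLSolution

/-- Every storyline instance has a crossing-minimum solution `S = (π₀, …)` such
that for every time step `i ≥ 1` carrying exactly one interaction, with character
set `C`: `πᵢ` decomposes as `πᵢ = πᵢ[C_a] ⋆ πᵢ[C] ⋆ πᵢ[C_b]` for some sets
`C_a, C_b`, and (a) if `C_a ⊆ AC(i−1) ∩ AC(i)` then `πᵢ[C_a] = π_{i−1}[C_a]`;
(b) if `C ⊆ AC(i−1) ∩ AC(i)` then `πᵢ[C] = π_{i−1}[C]`; (c) if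
`C_b ⊆ AC(i−1) ∩ AC(i)` then `πᵢ[C_b] = π_{i−1}[C_b]`. -/
theorem exists_minimum_with_propagation {α : Type*} [DecidableEq α]
    (P : SLInstance α) :
    ∃ S : SLSolution P,
      (∀ S' : SLSolution P, crS P S ≤ crS P S') ∧
      (∀ i : ℕ, 1 ≤ i → i < P.len → ∀ C : Finset α, (i, C) ∈ P.inters →
        (∀ p ∈ P.inters, p.1 = i → p = (i, C)) →
        ∃ Ca Cb : Finset α,
          S.ord i = restrict (S.ord i) Ca ++ restrict (S.ord i) C ++ restrict (S.ord i) Cb ∧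
          (Ca ⊆ P.AC (i - 1) ∩ P.AC i →
            restrict (S.ord i) Ca = restrict (S.ord (i - 1)) Ca) ∧
          (C ⊆ P.AC (i - 1) ∩ P.AC i →
            restrict (S.ord i) C = restrict (S.ord (i - 1)) C) ∧
          (Cb ⊆ P.AC (i - 1) ∩ P.AC i →
            restrict (S.ord i) Cb = restrict (S.ord (i - 1)) Cb)) := by
  obtain ⟨S, hS⟩ := SLSolution.exists_isLexMinimal P
  refine ⟨S, hS.1, fun i hi hlen C hC huniq => ?_⟩
  obtain ⟨j, rfl⟩ : ∃ j, i = j + 1 := ⟨i - 1, by omega⟩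
  simp only [Nat.add_sub_cancel]
  obtain ⟨p, m, s, hord, rfl⟩ := S.consec _ hC
  have hnd : (p ++ m ++ s).Nodup := hord ▸ S.nodup (j + 1)
  have hblock : ∀ pre mid suf, S.ord (j + 1) = pre ++ mid ++ suf →
      (∀ mid' : List α, mid'.Perm mid → ConsecutiveIn m.toFinset (pre ++ mid' ++ suf)) →
      mid.toFinset ⊆ P.AC j ∩ P.AC (j + 1) →
      restrict (S.ord (j + 1)) mid.toFinset = restrict (S.ord j) mid.toFinset :=
    fun pre mid suf h hcons hsub => hS.restrict_eq_restrict hlen h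
      (fun q hq hqi => huniq q hq hqi ▸ hcons) (hsub.trans Finset.inter_subset_left)
  refine ⟨p.toFinset, s.toFinset, ?_, hblock [] p (m ++ s) (by simp [hord]) ?_,
    hblock p m s hord ?_, hblock (p ++ m) s [] (by simp [hord]) ?_⟩
  · have hinfix := fun (b : List α) (h : b <:+: p ++ m ++ s) => h.restrict_toFinset hnd
    rw [hord, hinfix p ⟨[], m ++ s, by simp⟩, hinfix m (List.infix_append p m s),
      hinfix s ⟨p ++ m, [], by simp⟩]
  · exact fun mid' _ => ⟨mid', m, s, by simp, rfl⟩
  · exact fun mid' hperm => ⟨p, mid', s, rfl, List.toFinset_eq_of_perm _ _ hperm⟩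
  · exact fun mid' _ => ⟨p, m, mid', by simp, rfl⟩
end
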